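/- arXiv:2009.09349 — 13 statements merged into one kernel-verified Lean document; each statement's English description precedes it below -/
import Mathlib

section
/- Let m ≥ 2 and n ≥ 1 with m·n ≥ 2. The out m-shuffle O_m on a deck of m·n cards fixes the card with index m·n−1 (and the card with index 0), and for every index i < m·n−1, the position of the card after the shuffle is congruent to m·i modulo m·n−1; that is, O_m(i) = m·i mod (m·n−1) for all i < m·n−1. -/
/-- For `m ≥ 2`, `n ≥ 1` with `m·n ≥ 2`, the out `m`-shuffle `O` on a deck of
`m·n` cards (the permutation sending index `i` to `m·(i mod n) + ⌊i/n⌋`) fixes the cards with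
indices `m·n − 1` and `0`, and for every `i < m·n − 1` it sends `i` to `m·i mod (m·n − 1)`. -/
theorem out_shuffle_fix_and_formula (m n : ℕ) (hm : 2 ≤ m) (hn : 1 ≤ n) (hmn : 2 ≤ m * n)
    (O : Equiv.Perm (Fin (m * n)))
    (hO : ∀ i : Fin (m * n), (O i : ℕ) = m * ((i : ℕ) % n) + (i : ℕ) / n) :
    (∀ i : Fin (m * n), (i : ℕ) = m * n - 1 → O i = i) ∧
    (∀ i : Fin (m * n), (i : ℕ) = 0 → O i = i) ∧
    (∀ i : Fin (m * n), (i : ℕ) < m * n - 1 → (O i : ℕ) = m * (i : ℕ) % (m * n - 1)) := by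
  refine ⟨?_, ?_, ?_⟩
  · intro i hi
    apply Fin.ext
    rw [hO i, hi]
    have e1 : n * (m - 1) + n * 1 = n * m := by
      rw [← Nat.mul_add]
      congr 1
      omega
    have h1 : m * n - 1 = n * (m - 1) + (n - 1) := by
      have e2 : n * m = m * n := Nat.mul_comm n m
      omega
    have hrr : (m * n - 1) % n = n - 1 := by
      rw [h1, Nat.mul_add_mod]
      exact Nat.mod_eq_of_lt (by omega)
    have hqq : (m * n - 1) / n = m - 1 := by
      rw [h1, Nat.mul_add_div (by omega), Nat.div_eq_of_lt (by omega)]; omega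
    rw [hrr, hqq]
    have e3 : m * (n - 1) + m * 1 = m * n := by
      rw [← Nat.mul_add]
      congr 1
      omega
    omega
  · intro i hi
    apply Fin.ext
    rw [hO i, hi]
    simp
  · intro i hi
    rw [hO i]
    set q := (i : ℕ) / n with hq
    set r := (i : ℕ) % n with hr
    have hdecomp : (i : ℕ) = n * q + r := (Nat.div_add_mod (i : ℕ) n).symm
    have hrlt : r < n := Nat.mod_lt _ (by omega)
    have hqlt : q < m := (Nat.div_lt_iff_lt_mul (by omega)).mpr i.isLt
    have hmi : m * (i : ℕ) = m * (n * q) + m * r := by rw [hdecomp, Nat.mul_add]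
    have hX : m * (n * q) = m * n * q := (Nat.mul_assoc m n q).symm
    have hY : (m * n - 1) * q + 1 * q = m * n * q := by
      rw [← Nat.add_mul]
      congr 1
      omega
    have hmul : m * (i : ℕ) = (m * r + q) + (m * n - 1) * q := by omega
    have hsmall : m * r + q < m * n - 1 := by
      by_cases hcase : r = n - 1
      · have hnq : n * (m - 1) + n * 1 = n * m := by
          rw [← Nat.mul_add]; congr 1; omega
        have hnm : n * m = m * n := Nat.mul_comm n m
        have hq2 : q < m - 1 := by
          by_contra h
          have hqe : q = m - 1 := by omega
          have hmono : n * q = n * (m - 1) := by rw [hqe]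
          omega
        have hA : m * r ≤ m * (n - 1) := Nat.mul_le_mul_left m (by omega)
        have hB : m * (n - 1) + m * 1 = m * n := by
          rw [← Nat.mul_add]; congr 1; omega
        omega
      · have hA : m * r ≤ m * (n - 2) := Nat.mul_le_mul_left m (by omega)
        have hB : m * (n - 2) + m * 2 = m * n := by
          rw [← Nat.mul_add]; congr 1; omega
        omega
    rw [hmul, Nat.add_mul_mod_self_left, Nat.mod_eq_of_lt hsmall]
end

section
/- Let m ≥ 2 and n ≥ 1. The order of the out m-shuffle O_m, as an element of the symmetric group on the m·n card positions, equals the multiplicative order of m modulo m·n−1 (note m is invertible mod m·n−1 since m·n ≡ 1 (mod m·n−1)). -/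
/-!
Since `m * n = 1` in `ZMod (m * n - 1)`, the out-shuffle read modulo `m * n - 1` is multiplication
by `m`: `m * i = m * n * (i / n) + m * (i % n) ≡ m * (i % n) + i / n`. The positions
`0, …, m * n - 2` are distinct residues and the bottom card never moves, so `O ^ k = 1` exactly
when `m ^ k = 1`.
-/

open Equiv Function

section

variable {M : ℕ} {σ : Perm (Fin M)} {a : ZMod (M - 1)}

theorem natCast_perm_pow_apply (hσ : ∀ i : Fin M, ((σ i : ℕ) : ZMod (M - 1)) = a * (i : ℕ))
    (k : ℕ) (i : Fin M) : (((σ ^ k) i : ℕ) : ZMod (M - 1)) = a ^ k * (i : ℕ) := by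
  induction k with
  | zero => simp
  | succ k ih => rw [pow_succ', Perm.mul_apply, hσ, ih, ← mul_assoc, ← pow_succ']

theorem Fin.eq_of_natCast_eq_of_lt_pred {i j : Fin M} (hi : (i : ℕ) < M - 1)
    (hj : (j : ℕ) < M - 1) (h : ((i : ℕ) : ZMod (M - 1)) = (j : ℕ)) : i = j := by
  rw [ZMod.natCast_eq_natCast_iff', Nat.mod_eq_of_lt hi, Nat.mod_eq_of_lt hj] at h
  exact Fin.ext h

theorem orderOf_perm_eq_orderOf_of_natCast_apply (hM : 2 ≤ M)
    (hfix : ∀ i : Fin M, (i : ℕ) = M - 1 → σ i = i)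
    (hσ : ∀ i : Fin M, ((σ i : ℕ) : ZMod (M - 1)) = a * (i : ℕ)) : orderOf σ = orderOf a := by
  refine orderOf_eq_orderOf_iff.mpr fun k => ⟨fun hk => ?_, fun hk => Perm.ext fun i => ?_⟩
  · simpa [hk] using (natCast_perm_pow_apply hσ k ⟨1, hM⟩).symm
  have hfixk (j : Fin M) (hj : (j : ℕ) = M - 1) : (σ ^ k) j = j :=
    IsFixedPt.perm_pow (hfix j hj) k
  by_cases hi : (i : ℕ) = M - 1
  · exact hfixk i hi
  have hσi : ((σ ^ k) i : ℕ) ≠ M - 1 := fun h => hi ((σ ^ k).injective (hfixk _ h) ▸ h)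
  have hi_lt := i.isLt
  have hσi_lt := ((σ ^ k) i).isLt
  rw [Perm.one_apply]
  refine Fin.eq_of_natCast_eq_of_lt_pred (by omega) (by omega) ?_
  rw [natCast_perm_pow_apply hσ, hk, one_mul]

end

theorem natCast_eq_one_zmod_pred {N : ℕ} (hN : 0 < N) : (N : ZMod (N - 1)) = 1 := by
  obtain ⟨N, rfl⟩ := Nat.exists_eq_add_one_of_ne_zero hN.ne'
  rw [Nat.add_sub_cancel, Nat.cast_add_one, ZMod.natCast_self, zero_add]

theorem natCast_out_shuffle (m n i : ℕ) (hmn : 0 < m * n) :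
    ((m * (i % n) + i / n : ℕ) : ZMod (m * n - 1)) = m * i := by
  have hone := natCast_eq_one_zmod_pred hmn
  conv_rhs => rw [← Nat.div_add_mod i n]
  push_cast at hone ⊢
  linear_combination -((i / n : ℕ) : ZMod (m * n - 1)) * hone

theorem out_shuffle_apply_last {m n : ℕ} (hm : 0 < m) (hn : 0 < n) :
    m * ((m * n - 1) % n) + (m * n - 1) / n = m * n - 1 := by
  obtain ⟨m, rfl⟩ := Nat.exists_eq_add_one_of_ne_zero hm.ne'
  obtain ⟨n, rfl⟩ := Nat.exists_eq_add_one_of_ne_zero hn.ne'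
  have hsplit : (m + 1) * (n + 1) - 1 = n + (n + 1) * m := by rw [Nat.sub_eq_of_eq_add]; ring
  rw [hsplit, Nat.add_mul_mod_self_left, Nat.add_mul_div_left _ _ hn,
    Nat.mod_eq_of_lt n.lt_succ_self, Nat.div_eq_of_lt n.lt_succ_self]
  ring

/-- For `m ≥ 2`, `n ≥ 1`, the order of the out `m`-shuffle `O` on a deck of
`m·n` cards (the permutation sending index `i` to `m·(i mod n) + ⌊i/n⌋`), as an element of the
symmetric group on the `m·n` positions, equals the multiplicative order of `m` modulo `m·n − 1`. -/
theorem out_shuffle_order (m n : ℕ) (hm : 2 ≤ m) (hn : 1 ≤ n)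
    (O : Equiv.Perm (Fin (m * n)))
    (hO : ∀ i : Fin (m * n), (O i : ℕ) = m * ((i : ℕ) % n) + (i : ℕ) / n) :
    orderOf O = orderOf (m : ZMod (m * n - 1)) := by
  have hmn : 2 ≤ m * n := le_trans hm (Nat.le_mul_of_pos_right m hn)
  refine orderOf_perm_eq_orderOf_of_natCast_apply hmn (fun i hi => Fin.ext ?_) fun i => ?_
  · rw [hO, hi, out_shuffle_apply_last (by omega) hn]
  · rw [hO, natCast_out_shuffle m n i (by omega)]
end

section
/- Let m ≥ 2 and n ≥ 1. For every index i ∈ {0, …, m·n−1}, the position of the card with index i after an in m-shuffle I_m is congruent to m·i + (m−1) modulo m·n+1. -/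
/-- For `m ≥ 2`, `n ≥ 1`, the in `m`-shuffle `I` on a deck of `m·n` cards
(the permutation sending index `i` to `m·(i mod n) + (m − 1 − ⌊i/n⌋)`) sends each card with
index `i` to a position congruent to `m·i + (m − 1)` modulo `m·n + 1`. -/
theorem in_shuffle_formula (m n : ℕ) (hm : 2 ≤ m) (hn : 1 ≤ n)
    (I : Equiv.Perm (Fin (m * n)))
    (hI : ∀ i : Fin (m * n),
      (I i : ℕ) = m * ((i : ℕ) % n) + (m - 1 - (i : ℕ) / n)) :
    ∀ i : Fin (m * n), (I i : ℕ) ≡ m * (i : ℕ) + (m - 1) [MOD m * n + 1] := by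
  intro i
  set q := (i : ℕ) / n with hqdef
  set r := (i : ℕ) % n with hrdef
  have hlt : (i : ℕ) < m * n := i.isLt
  have hq : q ≤ m - 1 := by
    have : q < m := by
      rw [hqdef]
      exact Nat.div_lt_iff_lt_mul (by omega) |>.mpr (by omega)
    omega
  have h1 : n * q + r = (i : ℕ) := Nat.div_add_mod _ _
  have hmi : m * (i : ℕ) = m * n * q + m * r := by
    rw [← h1]; ring
  have key : m * (i : ℕ) + (m - 1) = (m * r + (m - 1 - q)) + (m * n + 1) * q := by
    rw [hmi]
    have h2 : (m - 1 - q) + q = m - 1 := by omega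
    have h3 : (m * n + 1) * q = m * n * q + q := by ring
    omega
  rw [Nat.ModEq, hI i, key, Nat.add_mul_mod_self_left]
end

section
/- Let m ≥ 2 and n ≥ 1. The order of the in m-shuffle I_m, as an element of the symmetric group on the m·n card positions, equals the multiplicative order of m modulo m·n+1 (note m is invertible mod m·n+1 since gcd(m, m·n+1) = 1). -/
/-- For `m ≥ 2`, `n ≥ 1`, the order of the in `m`-shuffle `I` on a deck of
`m·n` cards (the permutation sending index `i` to `m·(i mod n) + (m − 1 − ⌊i/n⌋)`), as an
element of the symmetric group on the `m·n` positions, equals the multiplicative order of `m`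
modulo `m·n + 1`. -/
theorem in_shuffle_order (m n : ℕ) (hm : 2 ≤ m) (hn : 1 ≤ n)
    (I : Equiv.Perm (Fin (m * n)))
    (hI : ∀ i : Fin (m * n),
      (I i : ℕ) = m * ((i : ℕ) % n) + (m - 1 - (i : ℕ) / n)) :
    orderOf I = orderOf (m : ZMod (m * n + 1)) := by
  have hmn : 0 < m * n := Nat.mul_pos (by omega) hn
  set N := m * n + 1 with hN
  have hNcast : (m : ZMod N) * (n : ZMod N) = -1 := by
    have h : ((N : ℕ) : ZMod N) = 0 := ZMod.natCast_self N
    rw [hN] at h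
    push_cast at h
    linear_combination h
  -- key congruence: I(i) + 1 ≡ m * (i + 1) mod N
  have key : ∀ i : Fin (m * n),
      (((I i : ℕ) + 1 : ℕ) : ZMod N) = (m : ZMod N) * (((i : ℕ) + 1 : ℕ) : ZMod N) := by
    intro i
    have hq : (i : ℕ) / n < m :=
      Nat.div_lt_of_lt_mul (lt_of_lt_of_le i.isLt (le_of_eq (mul_comm m n)))
    have hdm : n * ((i : ℕ) / n) + (i : ℕ) % n = (i : ℕ) := Nat.div_add_mod _ _
    rw [hI i]
    have h1 : m * ((i : ℕ) % n) + (m - 1 - (i : ℕ) / n) + 1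
        = m * ((i : ℕ) % n) + (m - (i : ℕ) / n) := by omega
    rw [h1]
    have hqle : (i : ℕ) / n ≤ m := hq.le
    have hi2 : (((i : ℕ) : ZMod N)) = (n : ZMod N) * (((i : ℕ) / n : ℕ) : ZMod N)
        + (((i : ℕ) % n : ℕ) : ZMod N) := by
      conv_lhs => rw [← hdm]
      push_cast
      ring
    push_cast [Nat.cast_sub hqle, hi2]
    linear_combination (-((((i : ℕ) / n : ℕ) : ZMod N))) * hNcast
  -- iterate
  have keyk : ∀ (k : ℕ) (i : Fin (m * n)),
      ((((I ^ k) i : ℕ) + 1 : ℕ) : ZMod N)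
        = (m : ZMod N) ^ k * (((i : ℕ) + 1 : ℕ) : ZMod N) := by
    intro k
    induction k with
    | zero => intro i; simp
    | succ k ih =>
      intro i
      have : (I ^ (k + 1)) i = I ((I ^ k) i) := by
        rw [pow_succ', Equiv.Perm.mul_apply]
      rw [this, key ((I ^ k) i), ih i, pow_succ]
      ring
  have hiff : ∀ k : ℕ, I ^ k = 1 ↔ (m : ZMod N) ^ k = 1 := by
    intro k
    constructor
    · intro h
      have := keyk k ⟨0, hmn⟩
      rw [h] at this
      simpa using this.symm
    · intro h
      ext i
      have := keyk k i
      rw [h, one_mul] at this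
      have hlt1 : ((I ^ k) i : ℕ) + 1 < N := by
        have := ((I ^ k) i).isLt; omega
      have hlt2 : (i : ℕ) + 1 < N := by have := i.isLt; omega
      have := (ZMod.natCast_eq_natCast_iff' _ _ _).mp this
      rw [Nat.mod_eq_of_lt hlt1, Nat.mod_eq_of_lt hlt2] at this
      simpa using Nat.succ_injective this
  have h1 : orderOf I ∣ orderOf (m : ZMod N) := by
    apply orderOf_dvd_of_pow_eq_one
    exact (hiff _).mpr (pow_orderOf_eq_one _)
  have h2 : orderOf (m : ZMod N) ∣ orderOf I := by
    apply orderOf_dvd_of_pow_eq_one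
    exact (hiff _).mp (pow_orderOf_eq_one _)
  exact Nat.dvd_antisymm h1 h2
end

section
/- Let m ≥ 2 and k ≥ 1, and consider a deck of m^k cards. The out m-shuffle O_m (the out m-shuffle for m stacks of n = m^{k−1} cards) acts on base-m indices as a left cyclic shift of the digit tuple: it sends the card with base-m index (x_1, x_2, …, x_k) to the position with base-m index (x_2, x_3, …, x_k, x_1). -/
/-!
Read a digit tuple as the base-`m` numeral it spells. Splitting off the leading digit `x₁` writes
`i = x₁ m^(k-1) + r` with `r < m^(k-1)` the numeral of `(x₂, …, x_k)`, so `i / m^(k-1) = x₁` and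
`i % m^(k-1) = r`; then `m r + x₁` is the numeral of `(x₂, …, x_k, x₁)`.
-/

open Finset

def digitsValue (m : ℕ) {k : ℕ} (x : Fin k → ℕ) : ℕ :=
  ∑ t : Fin k, x t * m ^ (k - 1 - (t : ℕ))

section

variable {m n : ℕ}

theorem digitsValue_cons (a : ℕ) (v : Fin n → ℕ) :
    digitsValue m (Fin.cons a v : Fin (n + 1) → ℕ) = a * m ^ n + digitsValue m v := by
  simp only [digitsValue, Fin.sum_univ_succ, Fin.cons_zero, Fin.cons_succ, Fin.val_zero,
    Fin.val_succ, Nat.add_sub_cancel, Nat.sub_zero, Nat.sub_add_eq, Nat.sub_right_comm _ _ 1]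

theorem digitsValue_snoc (v : Fin n → ℕ) (a : ℕ) :
    digitsValue m (Fin.snoc v a : Fin (n + 1) → ℕ) = m * digitsValue m v + a := by
  simp only [digitsValue, Fin.sum_univ_castSucc, Fin.snoc_castSucc, Fin.snoc_last,
    Fin.val_castSucc, Fin.val_last, mul_sum]
  congr 1
  · refine sum_congr rfl fun t _ => ?_
    rw [show n + 1 - 1 - (t : ℕ) = n - 1 - t + 1 by omega, pow_succ]
    ring
  · simp

theorem digitsValue_lt_pow {x : Fin n → ℕ} (hx : ∀ t, x t < m) : digitsValue m x < m ^ n := by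
  induction n with
  | zero => simp [digitsValue]
  | succ n ih =>
    rw [← Fin.cons_self_tail x, digitsValue_cons]
    have htail : digitsValue m (Fin.tail x) < m ^ n := ih fun t => hx t.succ
    calc x 0 * m ^ n + digitsValue m (Fin.tail x) < (x 0 + 1) * m ^ n := by linarith
      _ ≤ m * m ^ n := Nat.mul_le_mul_right _ (hx 0)
      _ = m ^ (n + 1) := (pow_succ' m n).symm

theorem digitsValue_comp_finRotate {x : Fin (n + 1) → ℕ} (hx : ∀ t, x t < m) :
    digitsValue m (x ∘ finRotate (n + 1)) =
      m * (digitsValue m x % m ^ n) + digitsValue m x / m ^ n := by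
  obtain ⟨a, v, rfl⟩ : ∃ a v, x = Fin.cons a v := ⟨_, _, (Fin.cons_self_tail x).symm⟩
  have ha : a < m := hx 0
  have hv : digitsValue m v < m ^ n := digitsValue_lt_pow fun t => hx t.succ
  have hpos : 0 < m ^ n := pow_pos ((Nat.zero_le a).trans_lt ha) n
  have hrot : Fin.cons a v ∘ finRotate (n + 1) = Fin.snoc v a :=
    (Fin.snoc_eq_cons_rotate v a).symm
  rw [hrot, digitsValue_snoc, digitsValue_cons, Nat.mul_add_mod_of_lt hv, mul_comm a,
    Nat.mul_add_div hpos, Nat.div_eq_of_lt hv, add_zero]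

end

/-- For `m ≥ 2`, `k ≥ 1`, the out `m`-shuffle on a deck of `m^k` cards
(`m` stacks of `n = m^(k−1)` cards) acts on base-`m` digit `k`-tuples as the left cyclic shift
`(x_1, …, x_k) ↦ (x_2, …, x_k, x_1)`.  Digits are indexed by `Fin k`, `x t` being the digit
of weight `m^(k−1−t)`. -/
theorem out_shuffle_digit_action (m k : ℕ) (hk : 1 ≤ k)
    (O : Equiv.Perm (Fin (m ^ k)))
    (hO : ∀ i : Fin (m ^ k),
      (O i : ℕ) = m * ((i : ℕ) % m ^ (k - 1)) + (i : ℕ) / m ^ (k - 1)) :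
    ∀ x : Fin k → ℕ, (∀ t, x t < m) →
      ∀ i : Fin (m ^ k), (i : ℕ) = ∑ t : Fin k, x t * m ^ (k - 1 - (t : ℕ)) →
        (O i : ℕ) = ∑ t : Fin k,
          x ⟨((t : ℕ) + 1) % k, Nat.mod_lt _ (by omega)⟩ * m ^ (k - 1 - (t : ℕ)) := by
  obtain ⟨n, rfl⟩ : ∃ n, k = n + 1 := ⟨k - 1, by omega⟩
  intro x hx i hi
  have hrot : (fun t : Fin (n + 1) => x ⟨((t : ℕ) + 1) % (n + 1), Nat.mod_lt _ (by omega)⟩) =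
      x ∘ finRotate (n + 1) := by
    ext t
    simp only [Function.comp_apply, finRotate_apply]
    congr 1
    ext
    simp [Fin.val_add, Nat.add_mod_mod]
  change (O i : ℕ) = digitsValue m fun t : Fin (n + 1) => _
  rw [hrot, digitsValue_comp_finRotate hx, hO, hi, Nat.add_sub_cancel]
  rfl
end

section
/- Let m ≥ 2 and k ≥ 1, and consider a deck of m^k cards. The in m-shuffle I_m (the in m-shuffle for m stacks of n = m^{k−1} cards) acts on base-m indices by a cyclic shift that flips the digit moved to the end: it sends the card with base-m index (x_1, x_2, …, x_k) to the position with base-m index (x_2, x_3, …, x_k, x̄_1), where x̄_1 = (m−1) − x_1. -/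
/-!
Reading an index `i = x₁·m^(k-1) + r` with `r < m^(k-1)` in base `m`, the quotient
`i / m^(k-1)` is the leading digit `x₁` and the remainder `r` is the value of the tail
`(x₂, …, x_k)`. The in-shuffle formula `m·r + (m-1-x₁)` is then visibly the value of
`(x₂, …, x_k, x̄₁)`: multiplying by `m` shifts the digits left and the flipped digit is appended.
-/

def digitValue (m : ℕ) {k : ℕ} (x : Fin k → ℕ) : ℕ :=
  ∑ t : Fin k, x t * m ^ (k - 1 - (t : ℕ))

section digitValue

variable {m k : ℕ}

lemma digitValue_cons (a : ℕ) (x : Fin k → ℕ) :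
    digitValue m (Fin.cons a x : Fin (k + 1) → ℕ) = a * m ^ k + digitValue m x := by
  simp only [digitValue, Fin.sum_univ_succ, Fin.cons_zero, Fin.cons_succ, Fin.val_zero,
    Fin.val_succ]
  congr 1
  refine Finset.sum_congr rfl fun t _ => ?_
  congr 2
  omega

lemma digitValue_snoc (x : Fin k → ℕ) (a : ℕ) :
    digitValue m (Fin.snoc x a : Fin (k + 1) → ℕ) = m * digitValue m x + a := by
  simp only [digitValue, Fin.sum_univ_castSucc, Fin.snoc_castSucc, Fin.snoc_last,
    Fin.val_castSucc, Fin.val_last, Finset.mul_sum, add_tsub_cancel_right, tsub_self, pow_zero,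
    mul_one]
  congr 1
  refine Finset.sum_congr rfl fun t _ => ?_
  rw [mul_left_comm, ← pow_succ']
  congr 2
  omega

lemma digitValue_lt {x : Fin k → ℕ} (hx : ∀ t, x t < m) : digitValue m x < m ^ k := by
  induction k with
  | zero => simp [digitValue]
  | succ k ih =>
    rw [← Fin.cons_self_tail x, digitValue_cons, pow_succ']
    have h_tail : digitValue m (Fin.tail x) < m ^ k := ih fun t => hx t.succ
    have h_head : x 0 + 1 ≤ m := hx 0
    nlinarith

lemma digitValue_cons_div_mod {a : ℕ} {x : Fin k → ℕ} (hx : ∀ t, x t < m) :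
    digitValue m (Fin.cons a x : Fin (k + 1) → ℕ) / m ^ k = a ∧
      digitValue m (Fin.cons a x : Fin (k + 1) → ℕ) % m ^ k = digitValue m x := by
  have hlt := digitValue_lt hx
  rw [Nat.div_mod_unique (by omega), digitValue_cons]
  exact ⟨by ring, hlt⟩

end digitValue

/-- For `m ≥ 2`, `k ≥ 1`, the in `m`-shuffle on a deck of `m^k` cards
(`m` stacks of `n = m^(k−1)` cards) acts on base-`m` digit `k`-tuples by
`(x_1, …, x_k) ↦ (x_2, …, x_k, x̄_1)` where `x̄_1 = (m−1) − x_1`.  Digits are indexed by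
`Fin k`, `x t` being the digit of weight `m^(k−1−t)`. -/
theorem in_shuffle_digit_action (m k : ℕ) (hk : 1 ≤ k)
    (I : Equiv.Perm (Fin (m ^ k)))
    (hI : ∀ i : Fin (m ^ k),
      (I i : ℕ) = m * ((i : ℕ) % m ^ (k - 1)) + (m - 1 - (i : ℕ) / m ^ (k - 1))) :
    ∀ x : Fin k → ℕ, (∀ t, x t < m) →
      ∀ i : Fin (m ^ k), (i : ℕ) = ∑ t : Fin k, x t * m ^ (k - 1 - (t : ℕ)) →
        (I i : ℕ) = ∑ t : Fin k,
          (if h : (t : ℕ) + 1 < k then x ⟨(t : ℕ) + 1, h⟩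
           else m - 1 - x ⟨0, by omega⟩) * m ^ (k - 1 - (t : ℕ)) := by
  intro x hx i hi
  obtain ⟨k, rfl⟩ : ∃ k', k = k' + 1 := ⟨k - 1, by omega⟩
  change (i : ℕ) = digitValue m x at hi
  rw [← Fin.cons_self_tail x] at hi
  obtain ⟨h_div, h_mod⟩ := digitValue_cons_div_mod (a := x 0) (x := Fin.tail x) fun t => hx t.succ
  change _ = digitValue m _
  rw [hI, add_tsub_cancel_right, hi, h_div, h_mod, ← digitValue_snoc]
  congr 1
  funext t
  induction t using Fin.lastCases <;> simp [Fin.tail, Fin.succ]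
end

section
/- Let m ≥ 2 and k ≥ 1. On a deck of m^k cards, the out m-shuffle O_m has order exactly k as an element of the symmetric group on the m^k card positions. -/
theorem shuffle_step (m n i : ℕ) (hn : 1 ≤ n) (hi : i < m*n - 1) :
    m * (i % n) + i / n = (m * i) % (m * n - 1) := by
  have hd := Nat.div_add_mod i n
  set q := i / n with hq
  set r := i % n with hr
  have hqm : q < m := Nat.div_lt_iff_lt_mul (by omega) |>.mpr (by omega)
  have hrn : r < n := Nat.mod_lt _ (by omega)
  have hb : m * r + q + 2 ≤ m * n := by
    obtain ⟨a, ha⟩ : ∃ a, n = r + 1 + a := ⟨n - r - 1, by omega⟩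
    obtain ⟨b, hb⟩ : ∃ b, m = q + 1 + b := ⟨m - q - 1, by omega⟩
    have h2 : n * q + r + 2 ≤ m * n := by omega
    rw [ha, hb] at h2 ⊢
    rcases Nat.eq_zero_or_pos b with hb0 | hb0 <;> nlinarith
  have hmi : m * i = q * (m*n - 1) + (m * r + q) := by
    have h3 : q * (m*n-1) + q*1 = q*(m*n) := by rw [← Nat.mul_add]; congr 1; omega
    have h4 : m * i = m*(n*q) + m*r := by rw [← hd]; ring
    have h5 : q*(m*n) = m*(n*q) := by ring
    omega
  rw [hmi, mul_comm q, Nat.mul_add_mod]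
  exact (Nat.mod_eq_of_lt (by omega)).symm

theorem shuffle_fix (m n : ℕ) (hm : 2 ≤ m) (hn : 1 ≤ n) :
    m * ((m*n - 1) % n) + (m*n - 1) / n = m*n - 1 := by
  have h1 : m*n - 1 = (n - 1) + (m-1)*n := by
    have : (m-1)*n + 1*n = m*n := by rw [← Nat.add_mul]; congr 1; omega
    omega
  rw [h1, Nat.add_mul_mod_self_right, Nat.add_mul_div_right _ _ (by omega),
    Nat.mod_eq_of_lt (by omega), Nat.div_eq_of_lt (by omega)]
  have h2 : m*(n-1) + m*1 = m*n := by rw [← Nat.mul_add]; congr 1; omega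
  omega

/-- For `m ≥ 2`, `k ≥ 1`, the out `m`-shuffle on a deck of `m^k` cards
(`m` stacks of `n = m^(k−1)` cards) has order exactly `k` in the symmetric group on the
`m^k` card positions. -/
theorem out_shuffle_order_eq_k (m k : ℕ) (hm : 2 ≤ m) (hk : 1 ≤ k)
    (O : Equiv.Perm (Fin (m ^ k)))
    (hO : ∀ i : Fin (m ^ k),
      (O i : ℕ) = m * ((i : ℕ) % m ^ (k - 1)) + (i : ℕ) / m ^ (k - 1)) :
    orderOf O = k := by
  have hn1 : 1 ≤ m ^ (k-1) := Nat.one_le_pow _ _ (by omega)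
  have hM : m ^ k = m * m ^ (k-1) := by
    rw [← pow_succ']; congr 1; omega
  have hM2 : 2 ≤ m ^ k := by
    calc 2 ≤ m := hm
    _ = m ^ 1 := (pow_one m).symm
    _ ≤ m ^ k := Nat.pow_le_pow_right (by omega) hk
  -- iterated formula
  have key : ∀ (j : ℕ) (i : Fin (m^k)), (i:ℕ) < m^k - 1 →
      ((O^j) i : ℕ) = (m^j * (i:ℕ)) % (m^k - 1) := by
    intro j
    induction j with
    | zero =>
      intro i hi
      simp only [pow_zero, Equiv.Perm.coe_one, id_eq, one_mul]
      exact (Nat.mod_eq_of_lt hi).symm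
    | succ j ih =>
      intro i hi
      have h1 := ih i hi
      have hlt : ((O^j) i : ℕ) < m^k - 1 := by
        rw [h1]; exact Nat.mod_lt _ (by omega)
      rw [pow_succ', Equiv.Perm.mul_apply, hO ((O^j) i)]
      have := shuffle_step m (m^(k-1)) ((O^j) i : ℕ) hn1 (by omega)
      rw [← hM] at this
      rw [this, h1]
      rw [Nat.mul_mod_mod, pow_succ' m j, mul_assoc]
  -- O^k = 1
  have hOk : O ^ k = 1 := by
    ext i
    rcases eq_or_lt_of_le (Nat.le_sub_one_of_lt i.isLt) with he | hlt
    · -- fixed point i = m^k - 1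
      have hfix : O i = i := by
        apply Fin.ext
        rw [hO i, he]
        have := shuffle_fix m (m^(k-1)) hm hn1
        rw [← hM] at this
        exact this
      have : ∀ j : ℕ, (O ^ j) i = i := by
        intro j
        induction j with
        | zero => simp
        | succ j ihj => rw [pow_succ', Equiv.Perm.mul_apply, ihj, hfix]
      rw [this k]; simp
    · have h2 := key k i hlt
      show ((O ^ k) i : ℕ) = (i : ℕ)
      rw [h2]
      have h3 : m^k * (i:ℕ) = (i:ℕ) + (i:ℕ) * (m^k - 1) := by
        have h4 : (i:ℕ) * (m^k - 1) + (i:ℕ) * 1 = (i:ℕ) * m^k := by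
          rw [← Nat.mul_add]; congr 1; omega
        have h5 : (i:ℕ) * m^k = m^k * (i:ℕ) := Nat.mul_comm _ _
        omega
      rw [h3, Nat.add_mul_mod_self_right]
      exact Nat.mod_eq_of_lt hlt
  have hdvd : orderOf O ∣ k := orderOf_dvd_of_pow_eq_one hOk
  have hpos : 0 < orderOf O := orderOf_pos O
  by_contra hne
  set d := orderOf O with hd
  have hdk : d < k := lt_of_le_of_ne (Nat.le_of_dvd (by omega) hdvd) hne
  have hk2 : 2 ≤ k := by omega
  have hM4 : 4 ≤ m ^ k := by
    calc (4:ℕ) = 2 ^ 2 := by norm_num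
    _ ≤ m ^ 2 := Nat.pow_le_pow_left hm 2
    _ ≤ m ^ k := Nat.pow_le_pow_right (by omega) hk2
  have h2n : 2 ≤ m ^ (k-1) := by
    calc 2 ≤ m := hm
    _ = m ^ 1 := (pow_one m).symm
    _ ≤ m ^ (k-1) := Nat.pow_le_pow_right (by omega) (by omega)
  have hmd : m ^ d ≤ m ^ (k-1) := Nat.pow_le_pow_right (by omega) (by omega)
  have hmd2 : 2 ≤ m ^ d := by
    calc 2 ≤ m := hm
    _ = m ^ 1 := (pow_one m).symm
    _ ≤ m ^ d := Nat.pow_le_pow_right (by omega) hpos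
  have hsmall : m ^ d < m ^ k - 1 := by
    have hmm : 2 * m^(k-1) ≤ m * m^(k-1) := Nat.mul_le_mul_right _ hm
    omega
  have h6 := key d ⟨1, by omega⟩ (show (1:ℕ) < m^k - 1 by omega)
  rw [hd, pow_orderOf_eq_one O] at h6
  simp only [Equiv.Perm.coe_one, id_eq] at h6
  rw [← hd, mul_one, Nat.mod_eq_of_lt hsmall] at h6
  omega
end

section
/- Let m ≥ 2 and k ≥ 1. On a deck of m^k cards, the in m-shuffle I_m has order exactly 2k as an element of the symmetric group on the m^k card positions. -/
/-!
Shift card positions by one and read them in `ZMod (m^k + 1)`. Writing `i = q·n + r` with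
`n = m^(k-1)`, the in-shuffle sends `i` to `m·r + (m-1-q)`, and
`m·(i+1) = q·(m^k + 1) + (m·r + (m-1-q) + 1)`, so it acts as multiplication by `m` on the nonzero
residues. Its order is therefore the multiplicative order of `m` modulo `m^k + 1`, which is `2k`:
`m^k = -1`, so `m^(2k) = 1`, while `1 < m^t < m^k + 1` for `0 < t ≤ k`.
-/

theorem orderOf_eq_orderOf_of_semiconj {α M : Type*} [Monoid M] {σ : Equiv.Perm α} {f : α → M}
    (hf : Function.Injective f) {a : M} (hσ : ∀ x, f (σ x) = a * f x) {x₀ : α} (hx₀ : f x₀ = 1) :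
    orderOf σ = orderOf a := by
  have hpow : ∀ t x, f ((σ ^ t) x) = a ^ t * f x := by
    intro t
    induction t with
    | zero => simp
    | succ t ih => intro x; rw [pow_succ', Equiv.Perm.mul_apply, hσ, ih, pow_succ', mul_assoc]
  refine orderOf_eq_orderOf_iff.mpr fun t => ⟨fun h => ?_, fun h => ?_⟩
  · simpa [h, hx₀] using (hpow t x₀).symm
  · ext x
    rw [Equiv.Perm.one_apply]
    exact hf (by rw [hpow, h, one_mul])

def inShuffle (m n i : ℕ) : ℕ :=
  m * (i % n) + (m - 1 - i / n)

theorem natCast_inShuffle_add_one {m n i : ℕ} (hi : i < m * n) :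
    ((inShuffle m n i + 1 : ℕ) : ZMod (m * n + 1)) = m * ((i + 1 : ℕ) : ZMod (m * n + 1)) := by
  have hq : i / n < m := Nat.div_lt_of_lt_mul (by rwa [mul_comm])
  have key : m * (i + 1) = i / n * (m * n + 1) + (inShuffle m n i + 1) := by
    obtain ⟨s, hs⟩ : ∃ s, m = i / n + s + 1 := ⟨m - 1 - i / n, by omega⟩
    rw [inShuffle, show m - 1 - i / n = s by omega]
    conv_lhs => rw [← Nat.div_add_mod i n]
    rw [hs]
    ring
  rw [← Nat.cast_mul, key]
  simp

theorem orderOf_natCast_zmod_pow_add_one {m k : ℕ} (hm : 2 ≤ m) (hk : 1 ≤ k) :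
    orderOf (m : ZMod (m ^ k + 1)) = 2 * k := by
  have hlow : ∀ t, 0 < t → t ≤ k → (m : ZMod (m ^ k + 1)) ^ t ≠ 1 := by
    intro t ht htk h
    have h1 : 1 < m ^ t := Nat.one_lt_pow ht.ne' (by omega)
    have h2 : m ^ t < m ^ k + 1 := Nat.lt_succ_of_le (Nat.pow_le_pow_right (by omega) htk)
    rw [← Nat.cast_pow, ← Nat.cast_one (R := ZMod (m ^ k + 1)), ZMod.natCast_eq_natCast_iff',
      Nat.mod_eq_of_lt h2, Nat.mod_eq_of_lt (h1.trans h2)] at h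
    omega
  have hk1 : (m : ZMod (m ^ k + 1)) ^ k = -1 := by
    rw [eq_neg_iff_add_eq_zero, ← Nat.cast_pow]
    exact_mod_cast ZMod.natCast_self (m ^ k + 1)
  have h2k : (m : ZMod (m ^ k + 1)) ^ (2 * k) = 1 := by
    rw [mul_comm, pow_mul, hk1, neg_one_sq]
  refine (orderOf_eq_iff (by omega)).mpr ⟨h2k, fun t ht2k ht h => ?_⟩
  rcases le_or_gt t k with htk | hkt
  · exact hlow t ht htk h
  · refine hlow (2 * k - t) (by omega) (by omega) ?_
    calc (m : ZMod (m ^ k + 1)) ^ (2 * k - t) = m ^ (2 * k - t) * m ^ t := by rw [h, mul_one]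
      _ = 1 := by rw [← pow_add, Nat.sub_add_cancel ht2k.le, h2k]

/-- For `m ≥ 2`, `k ≥ 1`, the in `m`-shuffle on a deck of `m^k` cards
(`m` stacks of `n = m^(k−1)` cards) has order exactly `2k` in the symmetric group on the
`m^k` card positions. -/
theorem in_shuffle_order_eq_two_k (m k : ℕ) (hm : 2 ≤ m) (hk : 1 ≤ k)
    (I : Equiv.Perm (Fin (m ^ k)))
    (hI : ∀ i : Fin (m ^ k),
      (I i : ℕ) = m * ((i : ℕ) % m ^ (k - 1)) + (m - 1 - (i : ℕ) / m ^ (k - 1))) :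
    orderOf I = 2 * k := by
  have hN : m * m ^ (k - 1) = m ^ k := by rw [← pow_succ']; congr 1; omega
  let residue : Fin (m ^ k) → ZMod (m ^ k + 1) := fun i => ((i + 1 : ℕ) : ZMod (m ^ k + 1))
  have hresidue : Function.Injective residue := by
    intro i j h
    simp only [residue, ZMod.natCast_eq_natCast_iff',
      Nat.mod_eq_of_lt (by omega : (i : ℕ) + 1 < m ^ k + 1),
      Nat.mod_eq_of_lt (by omega : (j : ℕ) + 1 < m ^ k + 1)] at h
    exact Fin.ext (by omega)
  have hshuffle : ∀ i, residue (I i) = m * residue i := by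
    intro i
    have h := natCast_inShuffle_add_one (n := m ^ (k - 1)) (by rw [hN]; exact i.isLt)
    have hIi : (I i : ℕ) = inShuffle m (m ^ (k - 1)) i := hI i
    rw [hN, ← hIi] at h
    exact h
  have hzero : residue ⟨0, pow_pos (by omega) k⟩ = 1 := by simp [residue]
  rw [orderOf_eq_orderOf_of_semiconj hresidue hshuffle hzero,
    orderOf_natCast_zmod_pow_add_one hm hk]
end

section
/- Let m ≥ 2 and k ≥ 1, and consider a deck of m^k cards with its in and out m-shuffles I_m and O_m. For 1 ≤ j ≤ k let B_j = O_m^{j−1} I_m O_m^{−j} (composed left to right). The subgroup of the symmetric group on the m^k card positions generated by B_1, B_2, …, B_k is isomorphic to (ℤ/2ℤ)^k; concretely, each B_j has order 2, B_i B_j = B_j B_i for all i, j, and no product of a nonempty subset of {B_1, …, B_k} is the identity. -/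
/-!
Write a card position `x < m ^ k` in base `m`, digit `i` being `x / m ^ i % m`. The out-shuffle
moves every digit up one place, the top digit wrapping around to the bottom, i.e. it translates
the digit vector, indexed by `Fin k`, by `1`; the in-shuffle does the same and moreover reverses
(`d ↦ m - 1 - d`) the digit that wraps around. Hence `I = O * F` with `F` reversing the top digit,
and `B (t + 1) = (O ^ t)⁻¹ * F * O ^ t` reverses the digit `t` places below the top. Reversals of
digits in a set of positions form a copy of `(ℤ/2)^k` inside the permutations of the deck, with
`B 1, …, B k` as its standard basis.
-/

open Equiv Function Fin.NatCast

lemma ZMod.eq_zero_or_eq_one (a : ZMod 2) : a = 0 ∨ a = 1 := by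
  revert a; decide

section DigitFlip

variable {ι : Type*} {m : ℕ}

def digitFlip (v : ι → ZMod 2) : Perm (ι → Fin m) :=
  piCongrRight fun i => if v i = 1 then Fin.revPerm else 1

lemma digitFlip_apply (v : ι → ZMod 2) (f : ι → Fin m) (i : ι) :
    digitFlip v f i = if v i = 1 then (f i).rev else f i := by
  unfold digitFlip
  split_ifs <;> simp [*]

lemma digitFlip_single [DecidableEq ι] (q : ι) (f : ι → Fin m) :
    digitFlip (Pi.single q 1) f = update f q (f q).rev := by
  ext i
  rcases eq_or_ne i q with rfl | h
  · simp [digitFlip_apply]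
  · simp [digitFlip_apply, h]

lemma digitFlip_add (v w : ι → ZMod 2) :
    digitFlip (m := m) (v + w) = digitFlip v * digitFlip w := by
  ext f i
  rcases ZMod.eq_zero_or_eq_one (v i) with hv | hv <;>
    rcases ZMod.eq_zero_or_eq_one (w i) with hw | hw <;>
    simp [digitFlip_apply, hv, hw, show (1 + 1 : ZMod 2) = 0 from rfl]

def digitFlipHom : Multiplicative (ι → ZMod 2) →* Perm (ι → Fin m) :=
  MonoidHom.mk' (fun v => digitFlip v.toAdd) fun v w => digitFlip_add v.toAdd w.toAdd

lemma digitFlipHom_injective (hm : 1 < m) : Injective (digitFlipHom (ι := ι) (m := m)) := by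
  refine (injective_iff_map_eq_one _).2 fun v hv => toAdd_eq_zero.1 (funext fun i => ?_)
  by_contra hvi
  have hfix : digitFlip (m := m) v.toAdd (fun _ => ⟨0, by omega⟩) i = ⟨0, by omega⟩ :=
    congrFun (Perm.ext_iff.1 hv _) i
  rw [digitFlip_apply, if_pos ((ZMod.eq_zero_or_eq_one _).resolve_left hvi), Fin.ext_iff,
    Fin.val_rev, Fin.val_mk] at hfix
  omega

end DigitFlip

section Translate

variable {ι α : Type*} [AddGroup ι]

def translatePerm (c : ι) : Perm (ι → α) :=
  (Equiv.addRight c).arrowCongr (Equiv.refl α)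

@[simp] lemma translatePerm_apply (c : ι) (f : ι → α) (i : ι) :
    translatePerm c f i = f (i - c) := by
  simp [translatePerm, sub_eq_add_neg]

lemma translatePerm_pow (c : ι) (t : ℕ) :
    (translatePerm c : Perm (ι → α)) ^ t = translatePerm (t • c) := by
  induction t with
  | zero => ext; simp
  | succ t ih => ext; simp [pow_succ, ih, succ_nsmul', sub_eq_add_neg, add_assoc]

lemma translatePerm_inv_mul_digitFlip_mul_translatePerm {m : ℕ} (c : ι) (v : ι → ZMod 2) :
    (translatePerm c)⁻¹ * digitFlip (m := m) v * translatePerm c =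
      digitFlip (v ∘ Equiv.addRight c) := by
  rw [mul_assoc, inv_mul_eq_iff_eq_mul]
  ext f i
  simp [digitFlip_apply]

end Translate

lemma Nat.mul_add_div_pow_succ {m r : ℕ} (a : ℕ) (hr : r < m) (i : ℕ) :
    (m * a + r) / m ^ (i + 1) = a / m ^ i := by
  rw [pow_succ', ← Nat.div_div_eq_div_mul, Nat.mul_add_div (by omega), Nat.div_eq_of_lt hr,
    add_zero]

lemma Nat.mod_pow_div_pow_mod (a : ℕ) {m i n : ℕ} (h : i < n) :
    a % m ^ n / m ^ i % m = a / m ^ i % m := by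
  rw [← Nat.mod_mul_right_div_self, ← Nat.mod_mul_right_div_self, ← pow_succ,
    Nat.mod_mod_of_dvd a (pow_dvd_pow m h)]

lemma Equiv.eq_permCongrHom_of_forall {α β : Type*} (e : α ≃ β) {P : Perm β} {Q : Perm α}
    (h : ∀ x, e.symm (P x) = Q (e.symm x)) : P = e.permCongrHom Q := by
  ext x
  simp [Equiv.permCongrHom_coe, Equiv.permCongr_apply, ← h]

section Shuffle

variable {m n : ℕ}

lemma finFunctionFinEquiv_symm_last (x : Fin (m ^ (n + 1))) :
    (finFunctionFinEquiv.symm x (Fin.last n) : ℕ) = x / m ^ n := by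
  rw [finFunctionFinEquiv_symm_apply_val, Fin.val_last]
  exact Nat.mod_eq_of_lt (Nat.div_lt_of_lt_mul (by rw [← pow_succ]; exact x.isLt))

/-- `hy` says that `y` is the image of `x` under the `m`-shuffle which picks up the card of
stack `s` in place `d s` of each round. -/
lemma finFunctionFinEquiv_symm_of_shuffle (d : Fin m → Fin m) {x y : Fin (m ^ (n + 1))}
    (hy : (y : ℕ) = m * (x % m ^ n) + d (finFunctionFinEquiv.symm x (Fin.last n))) :
    finFunctionFinEquiv.symm y = translatePerm 1 (update (finFunctionFinEquiv.symm x)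
      (Fin.last n) (d (finFunctionFinEquiv.symm x (Fin.last n)))) := by
  set r := d (finFunctionFinEquiv.symm x (Fin.last n))
  funext i
  apply Fin.ext
  rw [translatePerm_apply, finFunctionFinEquiv_symm_apply_val, hy]
  by_cases hi : i = 0
  · have hlast : (0 - 1 : Fin (n + 1)) = Fin.last n := Fin.ext (by simp)
    simp [hi, hlast, Nat.mod_eq_of_lt r.isLt]
  · have hlast : i - 1 ≠ Fin.last n := by
      rw [Ne, Fin.ext_iff, Fin.coe_sub_one, if_neg hi, Fin.val_last]
      omega
    have hival : (i : ℕ) ≠ 0 := fun h => hi (Fin.ext h)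
    obtain ⟨j, hj⟩ : ∃ j, (i : ℕ) = j + 1 := ⟨i - 1, by omega⟩
    rw [update_of_ne hlast, finFunctionFinEquiv_symm_apply_val, Fin.coe_sub_one, if_neg hi, hj,
      Nat.add_sub_cancel, Nat.mul_add_div_pow_succ _ r.isLt,
      Nat.mod_pow_div_pow_mod _ (by have := i.isLt; omega)]

lemma outShuffle_eq {O : Perm (Fin (m ^ (n + 1)))}
    (hO : ∀ x : Fin (m ^ (n + 1)), (O x : ℕ) = m * (x % m ^ n) + x / m ^ n) :
    O = finFunctionFinEquiv.permCongrHom (translatePerm 1) :=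
  Equiv.eq_permCongrHom_of_forall _ fun x => by
    rw [finFunctionFinEquiv_symm_of_shuffle (x := x) id
      (by rw [hO, id, finFunctionFinEquiv_symm_last]), id, update_eq_self]

lemma inShuffle_eq {I : Perm (Fin (m ^ (n + 1)))}
    (hI : ∀ x : Fin (m ^ (n + 1)), (I x : ℕ) = m * (x % m ^ n) + (m - 1 - x / m ^ n)) :
    I = finFunctionFinEquiv.permCongrHom
      (translatePerm 1 * digitFlip (Pi.single (Fin.last n) 1)) :=
  Equiv.eq_permCongrHom_of_forall _ fun x => by
    rw [finFunctionFinEquiv_symm_of_shuffle (x := x) Fin.rev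
      (by rw [hI, Fin.val_rev, finFunctionFinEquiv_symm_last]; omega), Perm.mul_apply,
      digitFlip_single]

lemma inv_pow_succ_mul_inShuffle_mul_pow {O I : Perm (Fin (m ^ (n + 1)))}
    (hO : ∀ x : Fin (m ^ (n + 1)), (O x : ℕ) = m * (x % m ^ n) + x / m ^ n)
    (hI : ∀ x : Fin (m ^ (n + 1)), (I x : ℕ) = m * (x % m ^ n) + (m - 1 - x / m ^ n))
    (t : ℕ) :
    O⁻¹ ^ (t + 1) * I * O ^ t =
      finFunctionFinEquiv.permCongrHom (digitFlip (Pi.single (Fin.rev (t : Fin (n + 1))) 1)) := by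
  rw [outShuffle_eq hO, inShuffle_eq hI, ← map_inv, ← map_pow, ← map_pow, ← map_mul,
    ← map_mul]
  congr 1
  set R : Perm (Fin (n + 1) → Fin m) := translatePerm 1
  set F : Perm (Fin (n + 1) → Fin m) := digitFlip (Pi.single (Fin.last n) 1)
  calc R⁻¹ ^ (t + 1) * (R * F) * R ^ t = (R ^ t)⁻¹ * F * R ^ t := by group
    _ = _ := by
      rw [translatePerm_pow, translatePerm_inv_mul_digitFlip_mul_translatePerm,
        Pi.single_comp_equiv, Equiv.addRight_symm, nsmul_one]
      simp [← sub_eq_add_neg, Fin.last_sub]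

end Shuffle

section Independent

variable {G ι κ : Type*} [Group G] [DecidableEq ι] (ψ : Multiplicative (ι → ZMod 2) →* G)

lemma orderOf_map_ofAdd_single (hψ : Injective ψ) (i : ι) :
    orderOf (ψ (.ofAdd (Pi.single i 1))) = 2 := by
  rw [orderOf_injective ψ hψ, orderOf_ofAdd_eq_addOrderOf]
  exact (addOrderOf_injective (AddMonoidHom.single (fun _ : ι => ZMod 2) i)
    (fun _ _ h => Pi.single_injective i h) 1).trans (ZMod.addOrderOf_one 2)

lemma closure_range_ofAdd_single [Finite ι] :
    Subgroup.closure (Set.range fun i : ι => Multiplicative.ofAdd (Pi.single i (1 : ZMod 2))) =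
      ⊤ := by
  refine eq_top_iff.2 fun v _ => ?_
  change Multiplicative.ofAdd v.toAdd ∈ _
  induction v.toAdd using Pi.single_induction with
  | zero => exact Subgroup.one_mem _
  | add f g hf hg => exact mul_mem hf hg
  | single i a =>
    rcases ZMod.eq_zero_or_eq_one a with rfl | rfl
    · simp
    · exact Subgroup.subset_closure ⟨i, rfl⟩

variable {σ : κ → ι} {B : κ → G} {S : Set κ}

lemma list_prod_map_ne_one [DecidableEq κ] (hψ : Injective ψ) (hσ : Set.InjOn σ S)
    (hB : ∀ j ∈ S, B j = ψ (.ofAdd (Pi.single (σ j) 1))) {l : List κ} (hl : l.Nodup)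
    (hlS : ∀ j ∈ l, j ∈ S) (hne : l ≠ []) : (l.map B).prod ≠ 1 := by
  have hprod : (l.map B).prod = ψ (.ofAdd (∑ j ∈ l.toFinset, Pi.single (σ j) 1)) := by
    rw [ofAdd_sum, List.prod_toFinset _ hl, map_list_prod, List.map_map]
    exact congrArg List.prod (List.map_congr_left fun j hj => hB j (hlS j hj))
  obtain ⟨j₀, hj₀⟩ := List.exists_mem_of_ne_nil l hne
  rw [hprod, ← map_one ψ, hψ.ne_iff, ← ofAdd_zero, Multiplicative.ofAdd.injective.ne_iff]
  refine ne_of_apply_ne (· (σ j₀)) ?_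
  rw [Finset.sum_apply, Finset.sum_eq_single_of_mem j₀ (List.mem_toFinset.2 hj₀)]
  · simp
  · intro j hj hne
    exact Pi.single_eq_of_ne
      (fun h => hne (hσ (hlS j (List.mem_toFinset.1 hj)) (hlS j₀ hj₀) h.symm)) _

lemma closure_image_eq_range [Finite ι] (hσ : Set.SurjOn σ S Set.univ)
    (hB : ∀ j ∈ S, B j = ψ (.ofAdd (Pi.single (σ j) 1))) :
    Subgroup.closure (B '' S) = ψ.range := by
  have himage : B '' S = ψ '' Set.range fun i => .ofAdd (Pi.single i 1) := by
    ext g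
    constructor
    · rintro ⟨j, hj, rfl⟩
      exact ⟨_, ⟨σ j, rfl⟩, (hB j hj).symm⟩
    · rintro ⟨_, ⟨i, rfl⟩, rfl⟩
      obtain ⟨j, hj, rfl⟩ := hσ (Set.mem_univ i)
      exact ⟨j, hj, hB j hj⟩
  rw [himage, ← MonoidHom.map_closure, closure_range_ofAdd_single, MonoidHom.range_eq_map]

end Independent

lemma bijOn_rev_natCast_pred (n : ℕ) :
    Set.BijOn (fun j : ℕ => Fin.rev ((j - 1 : ℕ) : Fin (n + 1))) (Set.Icc 1 (n + 1))
      Set.univ := by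
  refine ⟨fun _ _ => Set.mem_univ _, ?_,
    fun i _ => ⟨(Fin.rev i : ℕ) + 1, ⟨by omega, by omega⟩, ?_⟩⟩
  · rintro j₁ ⟨h₁, h₁'⟩ j₂ ⟨h₂, h₂'⟩ h
    have := congrArg Fin.val (Fin.rev_injective h)
    simp only [Fin.val_natCast, Nat.mod_eq_of_lt (by omega : j₁ - 1 < n + 1),
      Nat.mod_eq_of_lt (by omega : j₂ - 1 < n + 1)] at this
    omega
  · ext
    simp only [Fin.val_rev, Nat.reduceSubDiff, add_tsub_cancel_right, Fin.val_natCast,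
      Nat.mod_eq_of_lt (by omega : n - i < n + 1)]
    omega

/-- For `m ≥ 2`, `k ≥ 1`, with `O`, `I` the out and in `m`-shuffles on a
deck of `m^k` cards and `B j = O^(j−1) I O^(−j)` (composed left to right; in Mathlib's
right-to-left convention `(O⁻¹)^j * I * O^(j−1)`) for `1 ≤ j ≤ k`: each `B j` has order 2,
the `B j` pairwise commute, no product of a nonempty subset of `{B 1, …, B k}` is the
identity, and the subgroup generated by `B 1, …, B k` is isomorphic to `(ℤ/2ℤ)^k`. -/
theorem B_subgroup_iso (m k : ℕ) (hm : 2 ≤ m) (hk : 1 ≤ k)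
    (O I : Equiv.Perm (Fin (m ^ k)))
    (hO : ∀ i : Fin (m ^ k),
      (O i : ℕ) = m * ((i : ℕ) % m ^ (k - 1)) + (i : ℕ) / m ^ (k - 1))
    (hI : ∀ i : Fin (m ^ k),
      (I i : ℕ) = m * ((i : ℕ) % m ^ (k - 1)) + (m - 1 - (i : ℕ) / m ^ (k - 1)))
    (B : ℕ → Equiv.Perm (Fin (m ^ k)))
    (hB : ∀ j, B j = (O⁻¹) ^ j * I * O ^ (j - 1)) :
    (∀ j, 1 ≤ j → j ≤ k → orderOf (B j) = 2) ∧
    (∀ j₁ j₂, 1 ≤ j₁ → j₁ ≤ k → 1 ≤ j₂ → j₂ ≤ k → B j₁ * B j₂ = B j₂ * B j₁) ∧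
    (∀ s : Finset ℕ, s ⊆ Finset.Icc 1 k → s.Nonempty →
      ((s.sort (· ≤ ·)).map B).prod ≠ 1) ∧
    Nonempty (↥(Subgroup.closure (B '' Set.Icc 1 k)) ≃*
      Multiplicative (Fin k → ZMod 2)) := by
  obtain ⟨n, rfl⟩ : ∃ n, k = n + 1 := ⟨k - 1, by omega⟩
  simp only [Nat.add_sub_cancel] at hO hI
  set ψ : Multiplicative (Fin (n + 1) → ZMod 2) →* Perm (Fin (m ^ (n + 1))) :=
    finFunctionFinEquiv.permCongrHom.toMonoidHom.comp digitFlipHom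
  have hψ : Injective ψ :=
    finFunctionFinEquiv.permCongrHom.injective.comp (digitFlipHom_injective hm)
  have hσ := bijOn_rev_natCast_pred n
  have hBψ : ∀ j ∈ Set.Icc 1 (n + 1),
      B j = ψ (.ofAdd (Pi.single (Fin.rev ((j - 1 : ℕ) : Fin (n + 1))) 1)) := by
    rintro j ⟨hj, -⟩
    obtain ⟨t, rfl⟩ : ∃ t, j = t + 1 := ⟨j - 1, by omega⟩
    rw [hB, Nat.add_sub_cancel, inv_pow_succ_mul_inShuffle_mul_pow hO hI]
    rfl
  refine ⟨fun j h₁ h₂ => ?_, fun j₁ j₂ h₁ h₁' h₂ h₂' => ?_, fun s hs hne => ?_, ?_⟩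
  · rw [hBψ j ⟨h₁, h₂⟩]
    exact orderOf_map_ofAdd_single ψ hψ _
  · rw [hBψ j₁ ⟨h₁, h₁'⟩, hBψ j₂ ⟨h₂, h₂'⟩]
    exact ((Commute.all _ _).map ψ).eq
  · refine list_prod_map_ne_one ψ hψ hσ.injOn hBψ (s.sort_nodup _)
      (fun j hj => Finset.mem_Icc.1 (hs ((s.mem_sort _).1 hj))) ?_
    exact List.ne_nil_of_length_pos (by rw [Finset.length_sort]; exact hne.card_pos)
  · exact ⟨(MulEquiv.subgroupCongr (closure_image_eq_range ψ hσ.surjOn hBψ)).trans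
      (MonoidHom.ofInjective hψ).symm⟩
end

section
/- Let m ≥ 2 and k ≥ 1, and consider a deck of m^k cards with its in and out m-shuffles I_m and O_m. For 1 ≤ j ≤ k let B_j = O_m^{j−1} I_m O_m^{−j} (composed left to right). Then conjugation by O_m cyclically permutes the B_j: the left-to-right composite O_m B_j O_m^{−1} (apply O_m first, then B_j, then O_m^{−1}) equals B_{j+1} for j = 1, …, k−1, and equals B_1 for j = k. -/
/-!
Reading card positions modulo `m ^ k - 1`, the out-shuffle multiplies them by `m` and fixes the
bottom card. Since `m ^ k ≡ 1`, the permutation `O ^ k` preserves every position modulo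
`m ^ k - 1` while fixing the bottom card, so `O ^ k = 1`. The first claim is then pure group
algebra, and the second is the first one at `j = k`, where `B (k + 1) = B 1` because `O ^ k = 1`.
-/

def outShuffle (m n i : ℕ) : ℕ := m * (i % n) + i / n

lemma outShuffle_modEq {m n N i : ℕ} (hN : m * n = N) (hi : i < N) :
    outShuffle m n i ≡ m * i [MOD N - 1] := by
  subst hN
  obtain ⟨M, hM⟩ : ∃ M, m * n = M + 1 := ⟨m * n - 1, by omega⟩
  have hsplit : m * i = outShuffle m n i + M * (i / n) := by
    calc m * i = m * (n * (i / n) + i % n) := by rw [Nat.div_add_mod]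
      _ = (m * n) * (i / n) + m * (i % n) := by ring
      _ = outShuffle m n i + M * (i / n) := by rw [hM, outShuffle]; ring
  rw [hM, Nat.add_sub_cancel, hsplit]
  exact (Nat.add_mul_mod_self_left _ _ _).symm

lemma outShuffle_last {m n N : ℕ} (hN : m * n = N) (hN0 : 0 < N) :
    outShuffle m n (N - 1) = N - 1 := by
  subst hN
  obtain ⟨m', rfl⟩ : ∃ m', m = m' + 1 := ⟨m - 1, by grind⟩
  obtain ⟨n', rfl⟩ : ∃ n', n = n' + 1 := ⟨n - 1, by grind⟩
  have hlast : (m' + 1) * (n' + 1) - 1 = (n' + 1) * m' + n' := by grind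
  rw [outShuffle, hlast, Nat.mul_add_mod, Nat.mod_eq_of_lt (by omega),
    Nat.mul_add_div (by omega), Nat.div_eq_of_lt (by omega)]
  ring

namespace Equiv.Perm

variable {N : ℕ}

lemma pow_apply_modEq {σ : Perm (Fin N)} {a M : ℕ} (hσ : ∀ x, (σ x : ℕ) ≡ a * x [MOD M])
    (j : ℕ) (x : Fin N) : ((σ ^ j) x : ℕ) ≡ a ^ j * x [MOD M] := by
  induction j with
  | zero => simp [Nat.ModEq.refl]
  | succ j ih =>
    rw [pow_succ', mul_apply]
    calc (σ ((σ ^ j) x) : ℕ) ≡ a * ((σ ^ j) x) [MOD M] := hσ _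
      _ ≡ a * (a ^ j * x) [MOD M] := ih.mul_left a
      _ = a ^ (j + 1) * x := by ring

lemma eq_one_of_modEq_of_apply_last {σ : Perm (Fin N)}
    (hlast : ∀ x : Fin N, (x : ℕ) = N - 1 → σ x = x) (hσ : ∀ x, (σ x : ℕ) ≡ x [MOD N - 1]) :
    σ = 1 := by
  ext x
  by_cases hx : (x : ℕ) = N - 1
  · rw [hlast x hx, one_apply]
  · have hσx : (σ x : ℕ) ≠ N - 1 := fun h ↦ hx (σ.injective (hlast (σ x) h) ▸ h)
    exact (hσ x).eq_of_lt_of_lt (by omega) (by omega)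

end Equiv.Perm

lemma pow_eq_one_of_apply_eq_outShuffle {m k : ℕ} (hk : 1 ≤ k) {O : Equiv.Perm (Fin (m ^ k))}
    (hO : ∀ i : Fin (m ^ k), (O i : ℕ) = outShuffle m (m ^ (k - 1)) i) : O ^ k = 1 := by
  have hdeck : m ^ k = m * m ^ (k - 1) := by rw [← pow_succ', Nat.sub_add_cancel hk]
  have hO_modEq : ∀ x, (O x : ℕ) ≡ m * x [MOD m ^ k - 1] := fun x ↦ by
    rw [hO]
    exact outShuffle_modEq hdeck.symm x.isLt
  have hO_last : ∀ x : Fin (m ^ k), (x : ℕ) = m ^ k - 1 → O x = x := fun x hx ↦ by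
    ext
    rw [hO, hx]
    exact outShuffle_last hdeck.symm x.pos
  refine Equiv.Perm.eq_one_of_modEq_of_apply_last
    (fun x hx ↦ Equiv.Perm.pow_apply_eq_self_of_apply_eq_self (hO_last x hx) k) (fun x ↦ ?_)
  calc ((O ^ k) x : ℕ) ≡ m ^ k * x [MOD m ^ k - 1] := Equiv.Perm.pow_apply_modEq hO_modEq k x
    _ ≡ 1 * x [MOD m ^ k - 1] := (Nat.modEq_sub x.pos).mul_right _
    _ = x := one_mul _

theorem O_conjugates_B_cyclically_general (m k : ℕ) (hk : 1 ≤ k)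
    (O I : Equiv.Perm (Fin (m ^ k)))
    (hO : ∀ i : Fin (m ^ k),
      (O i : ℕ) = m * ((i : ℕ) % m ^ (k - 1)) + (i : ℕ) / m ^ (k - 1))
    (B : ℕ → Equiv.Perm (Fin (m ^ k)))
    (hB : ∀ j, B j = (O⁻¹) ^ j * I * O ^ (j - 1)) :
    (∀ j, 1 ≤ j → j ≤ k - 1 → O⁻¹ * B j * O = B (j + 1)) ∧
    O⁻¹ * B k * O = B 1 := by
  have hOk : O ^ k = 1 := pow_eq_one_of_apply_eq_outShuffle hk hO
  have hconj : ∀ j, 1 ≤ j → O⁻¹ * B j * O = B (j + 1) := fun j hj ↦ by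
    obtain ⟨i, rfl⟩ : ∃ i, j = i + 1 := ⟨j - 1, by omega⟩
    rw [hB, hB, Nat.add_sub_cancel, Nat.add_sub_cancel, pow_succ' O⁻¹ (i + 1), pow_succ O i]
    group
  refine ⟨fun j hj _ ↦ hconj j hj, ?_⟩
  rw [hconj k hk, hB, hB, pow_succ', Nat.add_sub_cancel, hOk, inv_pow, hOk]
  group

/-- For `m ≥ 2`, `k ≥ 1`, with `O`, `I` the out and in `m`-shuffles on a
deck of `m^k` cards and `B j = O^(j−1) I O^(−j)` (composed left to right; in Mathlib's
right-to-left convention `(O⁻¹)^j * I * O^(j−1)`) for `1 ≤ j ≤ k`: the left-to-right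
composite `O B_j O⁻¹` (apply `O` first, then `B j`, then `O⁻¹`; in Mathlib's convention
`O⁻¹ * B j * O`) equals `B (j+1)` for `j = 1, …, k−1` and equals `B 1` for `j = k`. -/
theorem O_conjugates_B_cyclically (m k : ℕ) (hm : 2 ≤ m) (hk : 1 ≤ k)
    (O I : Equiv.Perm (Fin (m ^ k)))
    (hO : ∀ i : Fin (m ^ k),
      (O i : ℕ) = m * ((i : ℕ) % m ^ (k - 1)) + (i : ℕ) / m ^ (k - 1))
    (hI : ∀ i : Fin (m ^ k),
      (I i : ℕ) = m * ((i : ℕ) % m ^ (k - 1)) + (m - 1 - (i : ℕ) / m ^ (k - 1)))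
    (B : ℕ → Equiv.Perm (Fin (m ^ k)))
    (hB : ∀ j, B j = (O⁻¹) ^ j * I * O ^ (j - 1)) :
    (∀ j, 1 ≤ j → j ≤ k - 1 → O⁻¹ * B j * O = B (j + 1)) ∧
    O⁻¹ * B k * O = B 1 :=
  O_conjugates_B_cyclically_general m k hk O I hO B hB
end

section
/- Let m ≥ 2 and k ≥ 2, and consider a deck of m^k cards with its out m-shuffle O_m and in m^2-shuffle I_{m^2}. For 1 ≤ j ≤ k define C_j = O_m^{j−1} I_{m^2} O_m^{−(j+1)}, composed left to right. Then for 1 ≤ j ≤ k−1 the permutation C_j flips exactly the j-th and (j+1)-st base-m digits, sending the card with base-m index (x_1, …, x_k) to (x_1, …, x_{j−1}, x̄_j, x̄_{j+1}, x_{j+2}, …, x_k), and C_k flips exactly the first and last digits, sending (x_1, …, x_k) to (x̄_1, x_2, …, x_{k−1}, x̄_k), where x̄ = (m−1) − x. -/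
/-!
Identify a card with the big-endian tuple of its base-`m` digits. The out `m`-shuffle rotates
this tuple one place to the left, and the in `m²`-shuffle flips the two leading digits and then
rotates by two places. Hence `C_j = O^{-(j+1)} I O^{j-1} = O^{-(j-1)} F O^{j-1}`, with `F` the
flip of the two leading digits, is the conjugate of `F` by a rotation through `j - 1` places:
it flips the digits in (0-based) positions `j - 1` and `j mod k`.
-/

open Equiv

namespace PerfectShuffle

variable {m k : ℕ}

def ofDigits (x : Fin k → Fin m) : Fin (m ^ k) :=
  finFunctionFinEquiv (x ∘ Fin.rev)

lemma val_ofDigits (x : Fin k → Fin m) :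
    (ofDigits x : ℕ) = ∑ t, (x t : ℕ) * m ^ (k - 1 - t) := by
  rw [ofDigits, finFunctionFinEquiv_apply, ← Equiv.sum_comp Fin.revPerm]
  simp only [Function.comp_apply, Fin.revPerm_apply, Fin.rev_rev, Fin.val_rev, Nat.sub_sub,
    Nat.add_comm 1]

lemma val_ofDigits_cons (a : Fin m) (x : Fin k → Fin m) :
    (ofDigits (Fin.cons a x : Fin (k + 1) → Fin m) : ℕ) = a * m ^ k + ofDigits x := by
  simp [val_ofDigits, Fin.sum_univ_succ, Nat.sub_sub, Nat.add_comm 1]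

lemma val_ofDigits_snoc (x : Fin k → Fin m) (a : Fin m) :
    (ofDigits (Fin.snoc x a : Fin (k + 1) → Fin m) : ℕ) = ofDigits x * m + a := by
  simp only [val_ofDigits, Fin.sum_univ_castSucc, Fin.snoc_castSucc, Fin.snoc_last, Fin.val_last,
    Fin.val_castSucc, Nat.add_sub_cancel, Nat.sub_self, pow_zero, mul_one, Finset.sum_mul]
  congr 1
  refine Finset.sum_congr rfl fun t _ => ?_
  rw [mul_assoc, ← pow_succ]
  congr 2
  omega

lemma cons_comp_finRotate {α : Type*} (a : α) (v : Fin k → α) :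
    (Fin.cons a v : Fin (k + 1) → α) ∘ finRotate (k + 1) = Fin.snoc v a :=
  (Fin.snoc_eq_cons_rotate v a).symm

lemma val_finRotate (t : Fin k) : (finRotate k t : ℕ) = (t + 1) % k := by
  have := t.neZero
  rw [finRotate_apply, Fin.val_add, Fin.val_one', Nat.add_mod_mod]

lemma val_finRotate_pow (n : ℕ) (t : Fin k) : ((finRotate k ^ n) t : ℕ) = (t + n) % k := by
  induction n with
  | zero => simp [Nat.mod_eq_of_lt t.isLt]
  | succ n ih => rw [pow_succ', Perm.mul_apply, val_finRotate, ih, Nat.mod_add_mod, add_assoc]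

def flipAt (a b : Fin k) (x : Fin k → Fin m) (t : Fin k) : Fin m :=
  if t = a ∨ t = b then (x t).rev else x t

lemma flipAt_comp_comp_inv (a b : Fin k) (x : Fin k → Fin m) (σ : Perm (Fin k)) :
    flipAt a b (x ∘ σ) ∘ ⇑σ⁻¹ = flipAt (σ a) (σ b) x := by
  ext t
  simp [flipAt, Equiv.symm_apply_eq]

lemma flipAt_cons_cons (a b : Fin m) (z : Fin k → Fin m) :
    flipAt 0 1 (Fin.cons a (Fin.cons b z) : Fin (k + 2) → Fin m) =
      Fin.cons a.rev (Fin.cons b.rev z) := by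
  ext t
  refine Fin.cases ?_ (fun s => Fin.cases ?_ (fun u => ?_) s) t <;>
    simp [flipAt, Fin.succ_succ_ne_one]

lemma val_ofDigits_flipAt (a b : Fin k) (x : Fin k → Fin m) :
    (ofDigits (flipAt a b x) : ℕ) =
      ∑ t, (if t = a ∨ t = b then m - 1 - x t else x t) * m ^ (k - 1 - t) := by
  rw [val_ofDigits]
  refine Finset.sum_congr rfl fun t _ => ?_
  unfold flipAt
  split_ifs <;> simp [Fin.val_rev, Nat.sub_sub, Nat.add_comm 1]

-- The shuffles of a deck cut into `p` stacks of `n` cards.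
def IsOutShuffle (p n : ℕ) {N : ℕ} (σ : Perm (Fin N)) : Prop :=
  ∀ i, (σ i : ℕ) = p * (i % n) + i / n

def IsInShuffle (p n : ℕ) {N : ℕ} (σ : Perm (Fin N)) : Prop :=
  ∀ i, (σ i : ℕ) = p * (i % n) + (p - 1 - i / n)

variable {O I : Perm (Fin (m ^ k))}

lemma IsOutShuffle.apply_ofDigits (hO : IsOutShuffle m (m ^ (k - 1)) O) (x : Fin k → Fin m) :
    O (ofDigits x) = ofDigits (x ∘ finRotate k) := by
  ext
  cases k with
  | zero =>
    have h1 : (O (ofDigits x) : ℕ) < 1 := (O _).isLt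
    have h2 : (ofDigits (x ∘ finRotate 0) : ℕ) < 1 := (ofDigits _).isLt
    omega
  | succ k =>
    obtain ⟨a, v, rfl⟩ : ∃ a v, x = Fin.cons a v := ⟨x 0, Fin.tail x, (Fin.cons_self_tail x).symm⟩
    have hlt : (ofDigits v : ℕ) < m ^ k := (ofDigits v).isLt
    rw [hO, cons_comp_finRotate, val_ofDigits_snoc, val_ofDigits_cons, Nat.add_sub_cancel,
      mul_comm (a : ℕ), Nat.mul_add_mod, Nat.mod_eq_of_lt hlt, Nat.mul_add_div (pow_pos a.pos k),
      Nat.div_eq_of_lt hlt, add_zero, mul_comm]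

lemma IsOutShuffle.pow_apply_ofDigits (hO : IsOutShuffle m (m ^ (k - 1)) O) (n : ℕ)
    (x : Fin k → Fin m) : (O ^ n) (ofDigits x) = ofDigits (x ∘ ⇑(finRotate k ^ n)) := by
  induction n generalizing x with
  | zero => rfl
  | succ n ih =>
    rw [pow_succ, Perm.mul_apply, hO.apply_ofDigits, ih, pow_succ', Perm.coe_mul]
    rfl

lemma IsOutShuffle.inv_pow_apply_ofDigits (hO : IsOutShuffle m (m ^ (k - 1)) O) (n : ℕ)
    (x : Fin k → Fin m) : (O⁻¹ ^ n) (ofDigits x) = ofDigits (x ∘ ⇑((finRotate k)⁻¹ ^ n)) := by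
  rw [inv_pow, Perm.inv_eq_iff_eq, hO.pow_apply_ofDigits, Function.comp_assoc, ← Perm.coe_mul,
    inv_pow, inv_mul_cancel, Perm.coe_one, Function.comp_id]

lemma IsInShuffle.apply_ofDigits (hk : 2 ≤ k) (hI : IsInShuffle (m ^ 2) (m ^ (k - 2)) I)
    (x : Fin k → Fin m) :
    I (ofDigits x) = ofDigits (flipAt ⟨0, by omega⟩ ⟨1, hk⟩ x ∘ ⇑(finRotate k ^ 2)) := by
  obtain ⟨k, rfl⟩ : ∃ n, k = n + 2 := ⟨k - 2, by omega⟩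
  obtain ⟨a, b, z, rfl⟩ : ∃ a b z, x = Fin.cons a (Fin.cons b z) :=
    ⟨x 0, Fin.tail x 0, Fin.tail (Fin.tail x), by rw [Fin.cons_self_tail, Fin.cons_self_tail]⟩
  have hlt : (ofDigits z : ℕ) < m ^ k := (ofDigits z).isLt
  have hx : (ofDigits (Fin.cons a (Fin.cons b z) : Fin (k + 2) → Fin m) : ℕ) =
      m ^ k * (a * m + b) + ofDigits z := by
    rw [val_ofDigits_cons, val_ofDigits_cons, pow_succ]
    ring
  have hflip : m ^ 2 - 1 - (a * m + b) = a.rev * m + b.rev := by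
    have ha : (a.rev : ℕ) + a + 1 = m := by rw [Fin.val_rev]; omega
    have hb : (b.rev : ℕ) + b + 1 = m := by rw [Fin.val_rev]; omega
    have : a.rev * m + b.rev + (a * m + b) + 1 = m ^ 2 := by linear_combination m * ha + hb
    omega
  ext
  rw [hI, Nat.add_sub_cancel, hx, Nat.mul_add_mod, Nat.mod_eq_of_lt hlt,
    Nat.mul_add_div (pow_pos a.pos k), Nat.div_eq_of_lt hlt, add_zero, hflip]
  simp only [Fin.zero_eta, Fin.mk_one, flipAt_cons_cons, sq, Perm.coe_mul, ← Function.comp_assoc,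
    cons_comp_finRotate, ← Fin.cons_snoc_eq_snoc_cons, val_ofDigits_snoc]
  ring

lemma IsOutShuffle.conj_apply_ofDigits (hk : 2 ≤ k) (hO : IsOutShuffle m (m ^ (k - 1)) O)
    (hI : IsInShuffle (m ^ 2) (m ^ (k - 2)) I) (n : ℕ) (x : Fin k → Fin m) :
    (O⁻¹ ^ (n + 2) * I * O ^ n) (ofDigits x) =
      ofDigits (flipAt ((finRotate k ^ n) ⟨0, by omega⟩) ((finRotate k ^ n) ⟨1, hk⟩) x) := by
  have hrot : finRotate k ^ 2 * (finRotate k)⁻¹ ^ (n + 2) = (finRotate k ^ n)⁻¹ := by group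
  rw [Perm.mul_apply, Perm.mul_apply, hO.pow_apply_ofDigits, hI.apply_ofDigits hk,
    hO.inv_pow_apply_ofDigits, Function.comp_assoc, ← Perm.coe_mul, hrot, flipAt_comp_comp_inv]

lemma IsOutShuffle.val_conj_apply (hk : 2 ≤ k) (hO : IsOutShuffle m (m ^ (k - 1)) O)
    (hI : IsInShuffle (m ^ 2) (m ^ (k - 2)) I) (n : ℕ) (x : Fin k → ℕ) (hx : ∀ t, x t < m)
    (i : Fin (m ^ k)) (hi : (i : ℕ) = ∑ t, x t * m ^ (k - 1 - t)) :
    ((O⁻¹ ^ (n + 2) * I * O ^ n) i : ℕ) =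
      ∑ t : Fin k, (if (t : ℕ) = n % k ∨ (t : ℕ) = (n + 1) % k then m - 1 - x t else x t)
        * m ^ (k - 1 - t) := by
  obtain rfl : i = ofDigits (fun t => ⟨x t, hx t⟩) := Fin.ext (by rw [hi, val_ofDigits])
  rw [hO.conj_apply_ofDigits hk hI, val_ofDigits_flipAt]
  simp only [Fin.ext_iff, val_finRotate_pow, zero_add, add_comm 1]

end PerfectShuffle

open PerfectShuffle

theorem C_j_flips_two_digits_general (m k : ℕ) (hk : 2 ≤ k)
    (O I2 : Equiv.Perm (Fin (m ^ k)))
    (hO : ∀ i : Fin (m ^ k),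
      (O i : ℕ) = m * ((i : ℕ) % m ^ (k - 1)) + (i : ℕ) / m ^ (k - 1))
    (hI2 : ∀ i : Fin (m ^ k),
      (I2 i : ℕ) = m ^ 2 * ((i : ℕ) % m ^ (k - 2)) + (m ^ 2 - 1 - (i : ℕ) / m ^ (k - 2)))
    (C : ℕ → Equiv.Perm (Fin (m ^ k)))
    (hC : ∀ j, C j = (O⁻¹) ^ (j + 1) * I2 * O ^ (j - 1)) :
    (∀ j, 1 ≤ j → j ≤ k - 1 →
      ∀ x : Fin k → ℕ, (∀ t, x t < m) →
        ∀ i : Fin (m ^ k), (i : ℕ) = ∑ t : Fin k, x t * m ^ (k - 1 - (t : ℕ)) →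
          (C j i : ℕ) = ∑ t : Fin k,
            (if (t : ℕ) = j - 1 ∨ (t : ℕ) = j then m - 1 - x t else x t)
              * m ^ (k - 1 - (t : ℕ))) ∧
    (∀ x : Fin k → ℕ, (∀ t, x t < m) →
      ∀ i : Fin (m ^ k), (i : ℕ) = ∑ t : Fin k, x t * m ^ (k - 1 - (t : ℕ)) →
        (C k i : ℕ) = ∑ t : Fin k,
          (if (t : ℕ) = 0 ∨ (t : ℕ) = k - 1 then m - 1 - x t else x t)
            * m ^ (k - 1 - (t : ℕ))) := by
  refine ⟨fun j hj hjk x hx i hi => ?_, fun x hx i hi => ?_⟩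
  · obtain ⟨n, rfl⟩ : ∃ n, j = n + 1 := ⟨j - 1, by omega⟩
    rw [hC, Nat.add_sub_cancel, IsOutShuffle.val_conj_apply hk hO hI2 n x hx i hi,
      Nat.mod_eq_of_lt (by omega), Nat.mod_eq_of_lt (by omega)]
  · rw [hC, show k + 1 = k - 1 + 2 by omega, IsOutShuffle.val_conj_apply hk hO hI2 _ x hx i hi,
      Nat.mod_eq_of_lt (by omega), Nat.sub_add_cancel (by omega), Nat.mod_self]
    simp only [or_comm]

/-- For `m ≥ 2`, `k ≥ 2`, with `O` the out `m`-shuffle and `I2` the in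
`m^2`-shuffle on a deck of `m^k` cards, define
`C j = O^(j−1) I2 O^(−(j+1))` (composed left to right; in Mathlib's right-to-left convention
`(O⁻¹)^(j+1) * I2 * O^(j−1)`) for `1 ≤ j ≤ k`.  For `1 ≤ j ≤ k−1`, `C j` flips exactly the
`j`-th and `(j+1)`-st base-`m` digits, and `C k` flips exactly the first and last digits,
where the flip of a digit `x` is `(m−1) − x`. -/
theorem C_j_flips_two_digits (m k : ℕ) (hm : 2 ≤ m) (hk : 2 ≤ k)
    (O I2 : Equiv.Perm (Fin (m ^ k)))
    (hO : ∀ i : Fin (m ^ k),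
      (O i : ℕ) = m * ((i : ℕ) % m ^ (k - 1)) + (i : ℕ) / m ^ (k - 1))
    (hI2 : ∀ i : Fin (m ^ k),
      (I2 i : ℕ) = m ^ 2 * ((i : ℕ) % m ^ (k - 2)) + (m ^ 2 - 1 - (i : ℕ) / m ^ (k - 2)))
    (C : ℕ → Equiv.Perm (Fin (m ^ k)))
    (hC : ∀ j, C j = (O⁻¹) ^ (j + 1) * I2 * O ^ (j - 1)) :
    (∀ j, 1 ≤ j → j ≤ k - 1 →
      ∀ x : Fin k → ℕ, (∀ t, x t < m) →
        ∀ i : Fin (m ^ k), (i : ℕ) = ∑ t : Fin k, x t * m ^ (k - 1 - (t : ℕ)) →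
          (C j i : ℕ) = ∑ t : Fin k,
            (if (t : ℕ) = j - 1 ∨ (t : ℕ) = j then m - 1 - x t else x t)
              * m ^ (k - 1 - (t : ℕ))) ∧
    (∀ x : Fin k → ℕ, (∀ t, x t < m) →
      ∀ i : Fin (m ^ k), (i : ℕ) = ∑ t : Fin k, x t * m ^ (k - 1 - (t : ℕ)) →
        (C k i : ℕ) = ∑ t : Fin k,
          (if (t : ℕ) = 0 ∨ (t : ℕ) = k - 1 then m - 1 - x t else x t)
            * m ^ (k - 1 - (t : ℕ))) :=
  C_j_flips_two_digits_general m k hk O I2 hO hI2 C hC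
end

section
/- Let m ≥ 2 and k ≥ 2, and consider a deck of m^k cards with its out m-shuffle O_m and in m^2-shuffle I_{m^2}. For 1 ≤ j ≤ k let C_j = O_m^{j−1} I_{m^2} O_m^{−(j+1)} (composed left to right). Then the left-to-right composite O_m C_j O_m^{−1} (apply O_m first, then C_j, then O_m^{−1}) equals C_{j+1} for j = 1, …, k−2, and equals C_k = C_1 C_2 ⋯ C_{k−1} for j = k−1. -/
namespace Statement16


/-- Value of a digit string (little-endian) in base `m`, length `k`. -/
def val (m k : ℕ) (d : ℕ → ℕ) : ℕ := ∑ p ∈ Finset.range k, d p * m ^ p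

lemma val_congr {m k : ℕ} {d d' : ℕ → ℕ} (h : ∀ p < k, d p = d' p) :
    val m k d = val m k d' :=
  Finset.sum_congr rfl fun p hp => by rw [h p (Finset.mem_range.mp hp)]

lemma val_lt {m : ℕ} (hm : 1 ≤ m) {k : ℕ} {d : ℕ → ℕ} (hd : ∀ p < k, d p < m) :
    val m k d < m ^ k := by
  induction k with
  | zero => simpa [val] using hm
  | succ n ih =>
    have h1 : val m (n+1) d = val m n d + d n * m ^ n := Finset.sum_range_succ _ _
    have h2 : val m n d < m ^ n := ih (fun p hp => hd p (by omega))
    have h3 : d n ≤ m - 1 := by have := hd n (by omega); omega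
    have h4 := Nat.mul_le_mul_right (m ^ n) h3
    have h5 : m ^ n + (m - 1) * m ^ n = m ^ (n+1) := by
      have : m ^ n + (m - 1) * m ^ n = (1 + (m - 1)) * m ^ n := by ring
      rw [this, show 1 + (m - 1) = m by omega, pow_succ, mul_comm]
    omega

lemma val_split (m n : ℕ) (d : ℕ → ℕ) :
    val m (n+1) d = val m n d + d n * m ^ n := Finset.sum_range_succ _ _

lemma val_shift (m n : ℕ) (d : ℕ → ℕ) :
    val m (n+1) d = val m n (fun p => d (p+1)) * m + d 0 := by
  rw [val, Finset.sum_range_succ']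
  simp [val, Finset.sum_mul, pow_succ, mul_assoc]

lemma split_mod {m n : ℕ} {low : ℕ} (t : ℕ) (hlow : low < m ^ n) :
    (low + t * m ^ n) % m ^ n = low := by
  simp [Nat.add_mul_mod_self_right, Nat.mod_eq_of_lt hlow]

lemma split_div {m n : ℕ} {low : ℕ} (t : ℕ) (hlow : low < m ^ n) :
    (low + t * m ^ n) / m ^ n = t := by
  rw [Nat.add_mul_div_right _ _ (Nat.pos_of_ne_zero (by omega)), Nat.div_eq_of_lt hlow, zero_add]

lemma val_digits {m : ℕ} (hm : 1 ≤ m) : ∀ (k i : ℕ), i < m ^ k →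
    val m k (fun p => i / m ^ p % m) = i := by
  intro k
  induction k with
  | zero => intro i hi; simp at hi; simp [val, hi]
  | succ n ih =>
    intro i hi
    have key : ∀ p < n, (i % m ^ n) / m ^ p % m = i / m ^ p % m := by
      intro p hp
      have h1 : m ^ n = m ^ p * m ^ (n - p) := by rw [← pow_add]; congr 1; omega
      rw [h1, Nat.mod_mul_right_div_self]
      exact Nat.mod_mod_of_dvd _ (dvd_pow_self m (by omega))
    have h2 : val m n (fun p => i / m ^ p % m) = i % m ^ n := by
      rw [← ih (i % m ^ n) (Nat.mod_lt _ (Nat.pos_of_ne_zero (by positivity)))]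
      exact val_congr (fun p hp => (key p hp).symm)
    rw [val_split, h2]
    have h3 : i / m ^ n < m := by
      rw [Nat.div_lt_iff_lt_mul (by positivity)]
      calc i < m ^ (n+1) := hi
        _ = m * m ^ n := by rw [pow_succ, mul_comm]
        _ ≤ m * m ^ n := le_rfl
      
    rw [Nat.mod_eq_of_lt h3]
    have := Nat.mod_add_div' i (m ^ n)
    omega



def rotD (k' : ℕ) (d : ℕ → ℕ) : ℕ → ℕ :=
  fun p => if p = 0 then d (k'+1) else d (p-1)

def rotD' (k' : ℕ) (d : ℕ → ℕ) : ℕ → ℕ :=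
  fun p => if p = k'+1 then d 0 else d (p+1)

def arotD (m k' : ℕ) (d : ℕ → ℕ) : ℕ → ℕ :=
  fun p => if p = k'+1 then m - 1 - d k' else if p = 0 then m - 1 - d (k'+1) else d (p-1)

lemma rotD_apply (k' : ℕ) (d : ℕ → ℕ) (p : ℕ) :
    rotD k' d p = if p = 0 then d (k'+1) else d (p-1) := rfl

lemma rotD'_apply (k' : ℕ) (d : ℕ → ℕ) (p : ℕ) :
    rotD' k' d p = if p = k'+1 then d 0 else d (p+1) := rfl

lemma arotD_apply (m k' : ℕ) (d : ℕ → ℕ) (p : ℕ) :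
    arotD m k' d p
      = if p = k'+1 then m - 1 - d k' else if p = 0 then m - 1 - d (k'+1) else d (p-1) := rfl

lemma rotD_bounds {m k' : ℕ} {d : ℕ → ℕ} (hd : ∀ p < k'+2, d p < m) :
    ∀ p < k'+2, rotD k' d p < m := by
  intro p hp; rw [rotD_apply]; split_ifs with h
  · exact hd _ (by omega)
  · exact hd _ (by omega)

lemma rotD'_bounds {m k' : ℕ} {d : ℕ → ℕ} (hd : ∀ p < k'+2, d p < m) :
    ∀ p < k'+2, rotD' k' d p < m := by
  intro p hp; rw [rotD'_apply]; split_ifs with h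
  · exact hd _ (by omega)
  · exact hd _ (by omega)

lemma arotD_bounds {m k' : ℕ} (hm : 1 ≤ m) {d : ℕ → ℕ} (hd : ∀ p < k'+2, d p < m) :
    ∀ p < k'+2, arotD m k' d p < m := by
  intro p hp; rw [arotD_apply]; split_ifs with h1 h2
  · omega
  · omega
  · exact hd _ (by omega)

lemma rotD_iter {k' : ℕ} {d : ℕ → ℕ} :
    ∀ t ≤ k'+2, ∀ p < k'+2,
      (rotD k')^[t] d p = if p < t then d (k'+2 - t + p) else d (p - t) := by
  intro t
  induction t with
  | zero => intro _ p hp; simp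
  | succ n ih =>
    intro ht p hp
    rw [Function.iterate_succ_apply', rotD_apply]
    by_cases h0 : p = 0
    · rw [if_pos h0, ih (by omega) (k'+1) (by omega)]
      split_ifs <;> first | (congr 1; omega) | (exfalso; omega)
    · rw [if_neg h0, ih (by omega) (p-1) (by omega)]
      split_ifs <;> first | (congr 1; omega) | (exfalso; omega)

lemma arotD_iter {m k' : ℕ} {d : ℕ → ℕ} (hd : ∀ p < k'+2, d p < m) :
    ∀ t, 1 ≤ t → t ≤ k'+1 → ∀ p < k'+2,
      (arotD m k')^[t] d p =
        if p = k'+1 then m - 1 - d (k'+1-t)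
        else if t ≤ p then d (p-t)
        else if p = t-1 then m - 1 - d (k'+1)
        else d (k'+2-t+p) := by
  intro t h1t
  induction t, h1t using Nat.le_induction with
  | base =>
    intro _ p hp
    rw [Function.iterate_one, arotD_apply]
    split_ifs <;> first | rfl | (congr 1; omega) | (exfalso; omega)
  | succ n hn ih =>
    intro ht p hp
    rw [Function.iterate_succ_apply', arotD_apply]
    have ihk : ∀ q < k'+2, (arotD m k')^[n] d q =
        if q = k'+1 then m - 1 - d (k'+1-n)
        else if n ≤ q then d (q-n)
        else if q = n-1 then m - 1 - d (k'+1)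
        else d (k'+2-n+q) := ih (by omega)
    by_cases h1 : p = k'+1
    · rw [if_pos h1, ihk k' (by omega)]
      split_ifs <;>
        first | rfl | (exfalso; omega) | (congr 1; omega) | (congr 1; congr 1; omega)
    · rw [if_neg h1]
      by_cases h2 : p = 0
      · rw [if_pos h2, ihk (k'+1) (by omega), if_pos rfl]
        have hb : d (k'+1-n) < m := hd _ (by omega)
        have hi : k'+2-(n+1)+p = k'+1-n := by omega
        split_ifs <;> first | (exfalso; omega) | (rw [hi]; omega)
      · rw [if_neg h2, ihk (p-1) (by omega)]
        split_ifs <;>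
          first | rfl | (exfalso; omega) | (congr 1; omega) | (congr 1; congr 1; omega)


section Perms

variable {m k' : ℕ} (hm : 2 ≤ m)
variable {O I2 : Equiv.Perm (Fin (m ^ (k'+2)))}
variable (hO : ∀ i : Fin (m ^ (k'+2)),
  (O i : ℕ) = m * ((i : ℕ) % m ^ (k'+1)) + (i : ℕ) / m ^ (k'+1))
variable (hI2 : ∀ i : Fin (m ^ (k'+2)),
  (I2 i : ℕ) = m ^ 2 * ((i : ℕ) % m ^ k') + (m ^ 2 - 1 - (i : ℕ) / m ^ k'))

include hm hO in
lemma O_apply {i : Fin (m ^ (k'+2))} {d : ℕ → ℕ} (hd : ∀ p < k'+2, d p < m)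
    (hi : (i : ℕ) = val m (k'+2) d) :
    (O i : ℕ) = val m (k'+2) (rotD k' d) := by
  have hlow : val m (k'+1) d < m ^ (k'+1) := val_lt (by omega) (fun p hp => hd p (by omega))
  have h1 : (i : ℕ) = val m (k'+1) d + d (k'+1) * m ^ (k'+1) := hi.trans (val_split _ _ _)
  have h2 : val m (k'+2) (rotD k' d) =
      val m (k'+1) (fun p => rotD k' d (p+1)) * m + rotD k' d 0 := val_shift _ _ _
  have h3 : val m (k'+1) (fun p => rotD k' d (p+1)) = val m (k'+1) d :=
    val_congr (fun p hp => by simp [rotD_apply])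
  rw [hO, h1, split_mod _ hlow, split_div _ hlow, h2, h3]
  simp [rotD_apply]
  ring

include hm hO in
lemma O_inv_apply {i : Fin (m ^ (k'+2))} {d : ℕ → ℕ} (hd : ∀ p < k'+2, d p < m)
    (hi : (i : ℕ) = val m (k'+2) d) :
    ((O⁻¹ i : Fin (m ^ (k'+2))) : ℕ) = val m (k'+2) (rotD' k' d) := by
  have hb : ∀ p < k'+2, rotD' k' d p < m := rotD'_bounds hd
  set x : Fin (m ^ (k'+2)) := ⟨val m (k'+2) (rotD' k' d), val_lt (by omega) hb⟩ with hx
  have hOx : O x = i := by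
    apply Fin.ext
    have : (O x : ℕ) = val m (k'+2) (rotD k' (rotD' k' d)) := O_apply hm hO hb rfl
    rw [this, hi]
    exact val_congr (fun p hp => by
      rw [rotD_apply]
      split_ifs with h
      · rw [rotD'_apply, if_pos rfl, h]
      · rw [rotD'_apply, if_neg (by omega)]
        congr 1; omega)
  have : O⁻¹ i = x := by rw [← hOx]; simp
  rw [this]

include hm hI2 in
lemma I2_apply {i : Fin (m ^ (k'+2))} {d : ℕ → ℕ} (hd : ∀ p < k'+2, d p < m)
    (hi : (i : ℕ) = val m (k'+2) d) :
    (I2 i : ℕ) = val m (k'+2)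
      (fun p => if p = 0 then m - 1 - d k' else if p = 1 then m - 1 - d (k'+1) else d (p - 2)) := by
  set d2 : ℕ → ℕ :=
    fun p => if p = 0 then m - 1 - d k' else if p = 1 then m - 1 - d (k'+1) else d (p - 2) with hd2
  have hlow : val m k' d < m ^ k' := val_lt (by omega) (fun p hp => hd p (by omega))
  have h1 : (i : ℕ) = val m k' d + (d k' + d (k'+1) * m) * m ^ k' := by
    rw [hi, val_split, val_split, pow_succ]; ring
  have h2 : val m (k'+2) d2 =
      val m (k'+1) (fun p => d2 (p+1)) * m + d2 0 := val_shift _ _ _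
  have h3 : val m (k'+1) (fun p => d2 (p+1)) =
      val m k' (fun p => d2 (p+2)) * m + d2 1 := val_shift _ _ _
  have h4 : val m k' (fun p => d2 (p+2)) = val m k' d :=
    val_congr (fun p hp => by simp [hd2])
  have hdk : d k' ≤ m - 1 := by have := hd k' (by omega); omega
  have hdk1 : d (k'+1) ≤ m - 1 := by have := hd (k'+1) (by omega); omega
  have hsq : (m-1) + (m-1)*m + 1 = m^2 := by
    obtain ⟨mm, rfl⟩ : ∃ mm, m = mm + 1 := ⟨m-1, by omega⟩
    simp only [Nat.add_sub_cancel]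
    ring
  have e3 : (m - 1 - d (k'+1)) * m + d (k'+1) * m = (m-1) * m := by
    rw [← Nat.add_mul]; congr 1; omega
  have hq : d k' + d (k'+1) * m < m ^ 2 := by
    have := Nat.mul_le_mul_right m hdk1
    omega
  have hcomp : m ^ 2 - 1 - (d k' + d (k'+1) * m) = (m - 1 - d k') + (m - 1 - d (k'+1)) * m := by
    omega
  have hz : d2 0 = m - 1 - d k' := by simp [hd2]
  have ho : d2 1 = m - 1 - d (k'+1) := by simp [hd2]
  rw [hI2, h1, split_mod _ hlow, split_div _ hlow, hcomp, h2, h3, h4, hz, ho, sq]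
  generalize (m - 1 - d k') = A
  generalize (m - 1 - d (k'+1)) = B
  ring




include hm hO hI2 in
lemma a_apply {i : Fin (m ^ (k'+2))} {d : ℕ → ℕ} (hd : ∀ p < k'+2, d p < m)
    (hi : (i : ℕ) = val m (k'+2) d) :
    (((O⁻¹ * I2) : Equiv.Perm (Fin (m ^ (k'+2)))) i : ℕ) = val m (k'+2) (arotD m k' d) := by
  rw [Equiv.Perm.mul_apply]
  set d2 : ℕ → ℕ :=
    fun p => if p = 0 then m - 1 - d k' else if p = 1 then m - 1 - d (k'+1) else d (p - 2) with hd2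
  have hd2b : ∀ p < k'+2, d2 p < m := by
    intro p hp; simp only [hd2]; split_ifs
    · omega
    · omega
    · exact hd _ (by omega)
  have h1 : (I2 i : ℕ) = val m (k'+2) d2 := I2_apply hm hI2 hd hi
  have h2 := O_inv_apply hm hO (i := I2 i) hd2b h1
  rw [h2]
  refine val_congr (fun p hp => ?_)
  rw [rotD'_apply, arotD_apply]
  by_cases g1 : p = k'+1
  · rw [if_pos g1, if_pos g1]; simp [hd2]
  · rw [if_neg g1, if_neg g1]
    by_cases g2 : p = 0
    · subst g2; simp [hd2]
    · rw [if_neg g2]; simp only [hd2]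
      rw [if_neg (by omega), if_neg (by omega)]
      exact congrArg d (by omega)

include hm hO hI2 in
lemma D_apply {i : Fin (m ^ (k'+2))} {d : ℕ → ℕ} (hd : ∀ p < k'+2, d p < m)
    (hi : (i : ℕ) = val m (k'+2) d) :
    (((O⁻¹ * (O⁻¹ * I2)) : Equiv.Perm (Fin (m ^ (k'+2)))) i : ℕ) = val m (k'+2)
      (fun p => if p = k'+1 then m - 1 - d (k'+1) else if p = k' then m - 1 - d k' else d p) := by
  rw [Equiv.Perm.mul_apply]
  have ha : (((O⁻¹ * I2) : Equiv.Perm (Fin (m ^ (k'+2)))) i : ℕ) = val m (k'+2) (arotD m k' d) :=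
    a_apply hm hO hI2 hd hi
  have hab : ∀ p < k'+2, arotD m k' d p < m := arotD_bounds (by omega) hd
  have h2 := O_inv_apply hm hO (i := (O⁻¹ * I2) i) hab ha
  rw [h2]
  refine val_congr (fun p hp => ?_)
  rw [rotD'_apply]
  by_cases g1 : p = k'+1
  · rw [if_pos g1, if_pos g1, arotD_apply, if_neg (by omega), if_pos rfl]
  · rw [if_neg g1, if_neg g1, arotD_apply]
    by_cases g2 : p = k'
    · rw [if_pos (by omega), if_pos g2]
    · rw [if_neg (by omega), if_neg (by omega), if_neg g2]
      exact congrArg d (by omega)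

-- iterated application of O and of a = O⁻¹ * I2
include hm hO in
lemma O_pow_apply : ∀ (t : ℕ) (i : Fin (m ^ (k'+2))) (d : ℕ → ℕ),
    (∀ p < k'+2, d p < m) → (i : ℕ) = val m (k'+2) d →
    (((O ^ t) : Equiv.Perm (Fin (m ^ (k'+2)))) i : ℕ) = val m (k'+2) ((rotD k')^[t] d) := by
  intro t
  induction t with
  | zero => intro i d hd hi; simpa using hi
  | succ n ih =>
    intro i d hd hi
    rw [show (O ^ (n+1) : Equiv.Perm (Fin (m ^ (k'+2)))) = O ^ n * O from pow_succ O n,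
      Equiv.Perm.mul_apply]
    have h1 : ((O i : Fin (m ^ (k'+2))) : ℕ) = val m (k'+2) (rotD k' d) := O_apply hm hO hd hi
    have h2 := ih (O i) (rotD k' d) (rotD_bounds hd) h1
    rw [h2, ← Function.iterate_succ_apply]

include hm hO hI2 in
lemma a_pow_apply : ∀ (t : ℕ) (i : Fin (m ^ (k'+2))) (d : ℕ → ℕ),
    (∀ p < k'+2, d p < m) → (i : ℕ) = val m (k'+2) d →
    ((((O⁻¹ * I2) ^ t) : Equiv.Perm (Fin (m ^ (k'+2)))) i : ℕ)
      = val m (k'+2) ((arotD m k')^[t] d) := by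
  intro t
  induction t with
  | zero => intro i d hd hi; simpa using hi
  | succ n ih =>
    intro i d hd hi
    rw [show ((O⁻¹ * I2) ^ (n+1) : Equiv.Perm (Fin (m ^ (k'+2)))) = (O⁻¹ * I2) ^ n * (O⁻¹ * I2)
        from pow_succ _ n,
      Equiv.Perm.mul_apply]
    have h1 := a_apply hm hO hI2 hd hi
    have h2 := ih ((O⁻¹ * I2) i) (arotD m k' d) (arotD_bounds (by omega) hd) h1
    rw [h2, ← Function.iterate_succ_apply]




include hm in
lemma arotD_iter_bounds {d : ℕ → ℕ} (hd : ∀ p < k'+2, d p < m) :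
    ∀ t, ∀ p < k'+2, (arotD m k')^[t] d p < m := by
  intro t
  induction t with
  | zero => simpa using hd
  | succ n ih =>
    intro p hp
    rw [Function.iterate_succ_apply']
    exact arotD_bounds (by omega) ih p hp

include hm hO in
lemma O_pow_eq_one : O ^ (k'+2) = 1 := by
  apply Equiv.ext
  intro i
  apply Fin.ext
  set d : ℕ → ℕ := fun p => (i : ℕ) / m ^ p % m with hdef
  have hd : ∀ p < k'+2, d p < m := fun p _ => Nat.mod_lt _ (by omega)
  have hi : (i : ℕ) = val m (k'+2) d := (val_digits (by omega) _ _ i.isLt).symm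
  rw [O_pow_apply hm hO (k'+2) i d hd hi]
  simp only [Equiv.Perm.one_apply]
  rw [hi]
  exact val_congr fun p hp => by
    rw [rotD_iter _ le_rfl p hp, if_pos hp]
    exact congrArg d (by omega)

include hm hO hI2 in
lemma a_pow_eq_one : (O⁻¹ * I2) ^ (k'+2) = 1 := by
  apply Equiv.ext
  intro i
  apply Fin.ext
  set d : ℕ → ℕ := fun p => (i : ℕ) / m ^ p % m with hdef
  have hd : ∀ p < k'+2, d p < m := fun p _ => Nat.mod_lt _ (by omega)
  have hi : (i : ℕ) = val m (k'+2) d := (val_digits (by omega) _ _ i.isLt).symm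
  set e : ℕ → ℕ := (arotD m k')^[k'+1] d with hedef
  have he : ∀ p < k'+2, e p < m := arotD_iter_bounds hm hd (k'+1)
  have h1 : (((O⁻¹ * I2) ^ (k'+1) : Equiv.Perm (Fin (m ^ (k'+2)))) i : ℕ) = val m (k'+2) e :=
    a_pow_apply hm hO hI2 (k'+1) i d hd hi
  have hstep : ((O⁻¹ * I2) ^ (k'+2) : Equiv.Perm (Fin (m ^ (k'+2)))) i
      = (O⁻¹ * I2) (((O⁻¹ * I2) ^ (k'+1) : Equiv.Perm (Fin (m ^ (k'+2)))) i) := by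
    rw [show ((O⁻¹ * I2) ^ (k'+2) : Equiv.Perm (Fin (m ^ (k'+2))))
        = (O⁻¹ * I2) * (O⁻¹ * I2) ^ (k'+1) from (pow_succ' _ _)]
    rw [Equiv.Perm.mul_apply]
  rw [hstep, a_apply hm hO hI2 he h1]
  simp only [Equiv.Perm.one_apply]
  rw [hi]
  have hiter : ∀ q < k'+2, e q =
      if q = k'+1 then m - 1 - d (k'+1-(k'+1))
      else if k'+1 ≤ q then d (q-(k'+1))
      else if q = (k'+1)-1 then m - 1 - d (k'+1)
      else d (k'+2-(k'+1)+q) := arotD_iter hd (k'+1) (by omega) le_rfl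
  refine val_congr fun p hp => ?_
  rw [arotD_apply]
  by_cases g1 : p = k'+1
  · rw [if_pos g1, hiter k' (by omega), if_neg (by omega), if_neg (by omega), if_pos (by omega)]
    have := hd (k'+1) (by omega)
    rw [g1]; omega
  · rw [if_neg g1]
    by_cases g2 : p = 0
    · rw [if_pos g2, hiter (k'+1) (by omega), if_pos rfl]
      have := hd 0 (by omega)
      have hix : k'+1-(k'+1) = 0 := by omega
      rw [hix, g2]; omega
    · rw [if_neg g2, hiter (p-1) (by omega), if_neg (by omega), if_neg (by omega),
        if_neg (by omega)]
      exact congrArg d (by omega)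

include hm hO hI2 in
lemma D_sq_eq_one : (O⁻¹ * (O⁻¹ * I2)) * (O⁻¹ * (O⁻¹ * I2)) = 1 := by
  apply Equiv.ext
  intro i
  apply Fin.ext
  set d : ℕ → ℕ := fun p => (i : ℕ) / m ^ p % m with hdef
  have hd : ∀ p < k'+2, d p < m := fun p _ => Nat.mod_lt _ (by omega)
  have hi : (i : ℕ) = val m (k'+2) d := (val_digits (by omega) _ _ i.isLt).symm
  set c : ℕ → ℕ := fun p => if p = k'+1 then m - 1 - d (k'+1)
    else if p = k' then m - 1 - d k' else d p with hcdef
  have hc : ∀ p < k'+2, c p < m := by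
    intro p hp; simp only [hcdef]; split_ifs
    · omega
    · omega
    · exact hd p hp
  have h1 : (((O⁻¹ * (O⁻¹ * I2)) : Equiv.Perm (Fin (m ^ (k'+2)))) i : ℕ) = val m (k'+2) c :=
    D_apply hm hO hI2 hd hi
  rw [Equiv.Perm.mul_apply, D_apply hm hO hI2 hc h1]
  simp only [Equiv.Perm.one_apply]
  rw [hi]
  refine val_congr fun p hp => ?_
  by_cases g1 : p = k'+1
  · rw [if_pos g1]
    have hb := hd (k'+1) (by omega)
    have hcv : c (k'+1) = m - 1 - d (k'+1) := by simp [hcdef]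
    rw [hcv, g1]; omega
  · rw [if_neg g1]
    by_cases g2 : p = k'
    · rw [if_pos g2]
      have hb := hd k' (by omega)
      have hne : k' ≠ k'+1 := by omega
      have hcv : c k' = m - 1 - d k' := by simp [hcdef, hne]
      rw [hcv, g2]; omega
    · rw [if_neg g2]
      simp only [hcdef]
      rw [if_neg g1, if_neg g2]




end Perms
end Statement16

open Statement16 in
/-- For `m ≥ 2`, `k ≥ 2`, with `O` the out `m`-shuffle and `I2` the in
`m^2`-shuffle on a deck of `m^k` cards and `C j = O^(j−1) I2 O^(−(j+1))` (composed left to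
right; in Mathlib's right-to-left convention `(O⁻¹)^(j+1) * I2 * O^(j−1)`): the left-to-right
composite `O C_j O⁻¹` (apply `O` first, then `C j`, then `O⁻¹`; in Mathlib's convention
`O⁻¹ * C j * O`) equals `C (j+1)` for `j = 1, …, k−2`, and for `j = k−1` it equals
`C k = C_1 C_2 ⋯ C_{k−1}` (this left-to-right product being, in Mathlib's convention, the
product of the reversed list). -/
theorem O_conjugates_C (m k : ℕ) (hm : 2 ≤ m) (hk : 2 ≤ k)
    (O I2 : Equiv.Perm (Fin (m ^ k)))
    (hO : ∀ i : Fin (m ^ k),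
      (O i : ℕ) = m * ((i : ℕ) % m ^ (k - 1)) + (i : ℕ) / m ^ (k - 1))
    (hI2 : ∀ i : Fin (m ^ k),
      (I2 i : ℕ) = m ^ 2 * ((i : ℕ) % m ^ (k - 2)) + (m ^ 2 - 1 - (i : ℕ) / m ^ (k - 2)))
    (C : ℕ → Equiv.Perm (Fin (m ^ k)))
    (hC : ∀ j, C j = (O⁻¹) ^ (j + 1) * I2 * O ^ (j - 1)) :
    (∀ j, 1 ≤ j → j ≤ k - 2 → O⁻¹ * C j * O = C (j + 1)) ∧
    O⁻¹ * C (k - 1) * O = C k ∧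
    C k = ((List.range (k - 1)).map (fun j => C (j + 1))).reverse.prod := by
  obtain ⟨k', rfl⟩ : ∃ k', k = k' + 2 := ⟨k - 2, by omega⟩
  have hO' : ∀ i : Fin (m ^ (k'+2)),
      (O i : ℕ) = m * ((i : ℕ) % m ^ (k'+1)) + (i : ℕ) / m ^ (k'+1) := hO
  have hI2' : ∀ i : Fin (m ^ (k'+2)),
      (I2 i : ℕ) = m ^ 2 * ((i : ℕ) % m ^ k') + (m ^ 2 - 1 - (i : ℕ) / m ^ k') := hI2
  have h1 : O ^ (k'+2) = 1 := O_pow_eq_one hm hO'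
  have h2 : (O⁻¹ * I2) ^ (k'+2) = 1 := a_pow_eq_one hm hO' hI2'
  have h3 : (O⁻¹ * (O⁻¹ * I2)) * (O⁻¹ * (O⁻¹ * I2)) = 1 := D_sq_eq_one hm hO' hI2'
  set D : Equiv.Perm (Fin (m ^ (k'+2))) := O⁻¹ * (O⁻¹ * I2) with hD
  have hCj : ∀ j : ℕ, C (j+1) = (O⁻¹) ^ j * D * O ^ j := by
    intro j
    rw [hC]
    simp only [Nat.add_sub_cancel]
    rw [hD]
    group
  refine ⟨?_, ?_, ?_⟩
  · intro j hj _
    obtain ⟨j', rfl⟩ : ∃ j', j = j' + 1 := ⟨j - 1, by omega⟩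
    rw [hC, hC]
    simp only [Nat.add_sub_cancel]
    group
  · have e1 : k' + 2 - 1 = k' + 1 := rfl
    rw [hC, hC, e1]
    simp only [Nat.add_sub_cancel]
    group
  · -- auxiliary group facts
    have hDinv : D⁻¹ = D := inv_eq_of_mul_eq_one_right h3
    have haD : O * D = O⁻¹ * I2 := by rw [hD]; group
    have hainv : (O⁻¹ * I2)⁻¹ = D * O⁻¹ := by rw [← haD, mul_inv_rev, hDinv]
    have hOk1 : O ^ (k'+1) = O⁻¹ := by
      apply eq_inv_of_mul_eq_one_left
      rw [← pow_succ]; exact h1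
    have hsemi : ∀ n : ℕ, D * (O * D) ^ n = (D * O) ^ n * D := by
      intro n
      exact SemiconjBy.pow_right ((mul_assoc D O D).symm) n
    have hak0 : (O⁻¹ * I2) ^ k' = (D * O⁻¹) * (D * O⁻¹) := by
      have e : (O⁻¹ * I2) ^ k' * ((O⁻¹ * I2) * (O⁻¹ * I2)) = 1 := by
        rw [← mul_assoc, ← pow_succ, ← pow_succ]; exact h2
      rw [eq_inv_of_mul_eq_one_left e, mul_inv_rev, hainv]
    -- the product formula
    have hP : ∀ n : ℕ, ((List.range (n+1)).map (fun j => C (j+1))).reverse.prod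
        = C (n+1) * ((List.range n).map (fun j => C (j+1))).reverse.prod := by
      intro n; rw [List.range_succ]; simp
    have key : ∀ n : ℕ, ((List.range (n+1)).map (fun j => C (j+1))).reverse.prod
        = (O⁻¹) ^ n * (D * O) ^ n * D := by
      intro n
      induction n with
      | zero =>
        rw [hP 0, hCj 0]
        simp
      | succ n ih =>
        rw [hP (n+1), ih, hCj (n+1)]
        rw [pow_succ' (D*O) n]
        generalize (D * O) ^ n = B
        group
    have e1 : k' + 2 - 1 = k' + 1 := rfl
    rw [e1, key k']
    have hstart : C (k'+2) = (O⁻¹) ^ (k'+1) * D * O⁻¹ :=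
      (hCj (k'+1)).trans (by rw [hOk1])
    rw [hstart]
    calc (O⁻¹) ^ (k'+1) * D * O⁻¹
        = (O⁻¹) ^ k' * ((D * D) * (O⁻¹ * (D * O⁻¹))) := by rw [h3]; group
      _ = (O⁻¹) ^ k' * (D * ((D * O⁻¹) * (D * O⁻¹))) := by group
      _ = (O⁻¹) ^ k' * (D * (O⁻¹ * I2) ^ k') := by rw [hak0]
      _ = (O⁻¹) ^ k' * (D * (O * D) ^ k') := by rw [haD]
      _ = (O⁻¹) ^ k' * ((D * O) ^ k' * D) := by rw [hsemi k']
      _ = (O⁻¹) ^ k' * (D * O) ^ k' * D := (mul_assoc _ _ _).symm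
end

section
/- Let m ≥ 2, k ≥ 2, and let y be a positive even integer with y < k and gcd(y, k) = 1. On a deck of m^k cards, the subgroup generated by the in and out m^y-shuffles equals the subgroup generated by the in m^2-shuffle and the out m-shuffle: ⟨I_{m^y}, O_{m^y}⟩ = ⟨I_{m^2}, O_m⟩ as subgroups of the symmetric group on the m^k card positions. -/
/-!
Read the position of a card in base `m`, with its `k` digit positions indexed by `ZMod k`. The out
`m^w`-shuffle rotates the digits by `w` places; hence `O_{m^y} = O_m ^ y`, and `O_m` is a power of
`O_{m^y}` since `y` is invertible mod `k`. The in `m^w`-shuffle is the out one followed by the map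
complementing the `w` lowest digits. So both groups contain `O_m`, and the sets of positions whose
complementation lies in such a group are closed under symmetric difference and cyclic shifts. In a
family with these closure properties, the window `{0, …, y-1}` and its shift by one differ in the
pair `{-1, y-1}`; chaining `n` shifted pairs with `n y ≡ 1 (mod k)` gives `{0, 1}`. Conversely, as
`y` is even, the window `{0, …, y-1}` is a disjoint union of shifts of `{0, 1}`.
-/

open Equiv Set
open scoped symmDiff

namespace ShuffleGroup

section Digits

variable {m : ℕ}

theorem mul_sub_one_sub_eq {M t a : ℕ} (hM : 0 < M) (ha : a < M * t) :
    M * t - 1 - a = M * (t - 1 - a / M) + (M - 1 - a % M) := by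
  have h1 : a % M < M := Nat.mod_lt _ hM
  have h2 : a / M < t := Nat.div_lt_of_lt_mul ha
  have h3 : M * (a / M) + a % M = a := Nat.div_add_mod a M
  have e1 : M * (t - 1 - a / M) = M * t - M - M * (a / M) := by
    rw [Nat.mul_sub, Nat.mul_sub, Nat.mul_one]
  have e2 : M * (a / M + 1) ≤ M * t := Nat.mul_le_mul_left M h2
  rw [Nat.mul_add, Nat.mul_one] at e2
  omega

theorem mod_pow_div_pow_mod {x w j : ℕ} (hj : j < w) :
    x % m ^ w / m ^ j % m = x / m ^ j % m := by
  rw [show m ^ w = m ^ j * m ^ (w - j) by rw [← pow_add]; congr 1; omega,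
    Nat.mod_mul_right_div_self]
  exact Nat.mod_mod_of_dvd _ (dvd_pow_self m (by omega))

theorem mul_pow_add_div_pow_mod_of_lt {w s q j : ℕ} (hq : q < m ^ w) (hj : j < w) :
    (m ^ w * s + q) / m ^ j % m = q / m ^ j % m := by
  rw [← mod_pow_div_pow_mod (x := m ^ w * s + q) hj, Nat.mul_add_mod, Nat.mod_eq_of_lt hq]

theorem mul_pow_add_div_pow_mod_of_le (hm : 0 < m) {w s q j : ℕ} (hq : q < m ^ w)
    (hj : w ≤ j) : (m ^ w * s + q) / m ^ j % m = s / m ^ (j - w) % m := by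
  rw [show m ^ j = m ^ w * m ^ (j - w) by rw [← pow_add]; congr 1; omega,
    ← Nat.div_div_eq_div_mul, Nat.mul_add_div (by positivity), Nat.div_eq_of_lt hq, add_zero]

theorem pow_sub_one_sub_div_pow_mod (hm : 0 < m) {w q j : ℕ} (hq : q < m ^ w) (hj : j < w) :
    (m ^ w - 1 - q) / m ^ j % m = m - 1 - q / m ^ j % m := by
  have hmj : 0 < m ^ j := by positivity
  have hsplit : m ^ w = m ^ j * m ^ (w - j) := by rw [← pow_add]; congr 1; omega
  have hq' : q < m ^ j * m ^ (w - j) := hsplit ▸ hq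
  rw [hsplit, mul_sub_one_sub_eq hmj hq', Nat.mul_add_div hmj,
    Nat.div_eq_of_lt (Nat.sub_lt_of_lt (Nat.sub_lt hmj one_pos)), add_zero]
  have hwj : m ^ (w - j) = m * m ^ (w - j - 1) := by rw [← pow_succ']; congr 1; omega
  rw [hwj, mul_sub_one_sub_eq hm (hwj ▸ Nat.div_lt_of_lt_mul hq'), Nat.mul_add_mod]
  exact Nat.mod_eq_of_lt (by omega)

theorem mul_pow_add_pow_sub_one_sub_div_pow_mod (hm : 0 < m) {w s q j : ℕ} (hq : q < m ^ w) :
    (m ^ w * s + (m ^ w - 1 - q)) / m ^ j % m =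
      if j < w then m - 1 - (m ^ w * s + q) / m ^ j % m else (m ^ w * s + q) / m ^ j % m := by
  have hq' : m ^ w - 1 - q < m ^ w := by omega
  split_ifs with hj
  · rw [mul_pow_add_div_pow_mod_of_lt hq' hj, mul_pow_add_div_pow_mod_of_lt hq hj,
      pow_sub_one_sub_div_pow_mod hm hq hj]
  · rw [mul_pow_add_div_pow_mod_of_le hm hq' (not_lt.1 hj),
      mul_pow_add_div_pow_mod_of_le hm hq (not_lt.1 hj)]

variable {k : ℕ}

theorem div_pow_sub_lt {w z : ℕ} (hw : w ≤ k) (hz : z < m ^ k) : z / m ^ (k - w) < m ^ w :=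
  Nat.div_lt_of_lt_mul (by rwa [← pow_add, Nat.sub_add_cancel hw])

theorem outShuffle_div_pow_mod [NeZero k] (hm : 0 < m) {w z : ℕ} (hw : w ≤ k) (hz : z < m ^ k)
    (j : ZMod k) :
    (m ^ w * (z % m ^ (k - w)) + z / m ^ (k - w)) / m ^ (j + w).val % m = z / m ^ j.val % m := by
  have hhi := div_pow_sub_lt hw hz
  have hjk := j.val_lt
  rw [ZMod.val_add, ZMod.val_natCast, Nat.add_mod_mod]
  -- `j + w` wraps around exactly when digit `j` is among the top `w` digits of `z`, which the
  -- shuffle brings to the bottom.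
  by_cases hj : j.val + w < k
  · rw [Nat.mod_eq_of_lt hj, mul_pow_add_div_pow_mod_of_le hm hhi (by omega), Nat.add_sub_cancel,
      mod_pow_div_pow_mod (by omega)]
  · rw [Nat.mod_eq_sub_mod (show k ≤ j.val + w by omega),
      Nat.mod_eq_of_lt (show j.val + w - k < k by omega),
      mul_pow_add_div_pow_mod_of_lt hhi (by omega), Nat.div_div_eq_div_mul, ← pow_add]
    congr 3
    omega

theorem eq_of_digits_eq {x y : Fin (m ^ k)}
    (h : ∀ j : ZMod k, (x : ℕ) / m ^ j.val % m = (y : ℕ) / m ^ j.val % m) : x = y :=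
  finFunctionFinEquiv.symm.injective <| funext fun j => Fin.ext <| by
    simpa only [finFunctionFinEquiv_symm_apply_val, ZMod.val_natCast_of_lt j.isLt] using h j

end Digits

section Permutations

variable {m k : ℕ}

def RotatesDigits (a : ZMod k) (P : Perm (Fin (m ^ k))) : Prop :=
  ∀ x j, (P x : ℕ) / m ^ (j + a).val % m = (x : ℕ) / m ^ j.val % m

open scoped Classical in
def FlipsDigits (S : Set (ZMod k)) (P : Perm (Fin (m ^ k))) : Prop :=
  ∀ x j, (P x : ℕ) / m ^ j.val % m =
    if j ∈ S then m - 1 - (x : ℕ) / m ^ j.val % m else (x : ℕ) / m ^ j.val % m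

variable {a b : ZMod k} {S T : Set (ZMod k)} {P Q R : Perm (Fin (m ^ k))}

theorem RotatesDigits.mul (hP : RotatesDigits a P) (hQ : RotatesDigits b Q) :
    RotatesDigits (b + a) (P * Q) := fun x j => by
  rw [Perm.mul_apply, ← add_assoc, hP, hQ]

theorem RotatesDigits.pow (hP : RotatesDigits a P) : ∀ n : ℕ, RotatesDigits (n • a) (P ^ n)
  | 0 => fun x j => by simp
  | n + 1 => by rw [pow_succ', succ_nsmul]; exact hP.mul (hP.pow n)

theorem RotatesDigits.eq (hP : RotatesDigits a P) (hQ : RotatesDigits a Q) : P = Q :=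
  Equiv.ext fun x => eq_of_digits_eq fun j => by rw [← sub_add_cancel j a, hP, hQ]

theorem flipsDigits_one : FlipsDigits (∅ : Set (ZMod k)) (1 : Perm (Fin (m ^ k))) :=
  fun x j => by simp

theorem FlipsDigits.mul (hm : 0 < m) (hP : FlipsDigits S P) (hQ : FlipsDigits T Q) :
    FlipsDigits (S ∆ T) (P * Q) := fun x j => by
  have := Nat.mod_lt ((x : ℕ) / m ^ j.val) hm
  rw [Perm.mul_apply, hP, hQ]
  by_cases hS : j ∈ S <;> by_cases hT : j ∈ T <;> simp [Set.mem_symmDiff, hS, hT]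
  omega

theorem FlipsDigits.conj (hR : RotatesDigits a R) (hP : FlipsDigits S P) :
    FlipsDigits ((· + a) ⁻¹' S) (R⁻¹ * P * R) := fun x j => by
  rw [← hR, Perm.mul_apply, Perm.mul_apply, Perm.coe_inv, apply_symm_apply, hP, hR]
  rfl

theorem FlipsDigits.eq (hP : FlipsDigits S P) (hQ : FlipsDigits S Q) : P = Q :=
  Equiv.ext fun x => eq_of_digits_eq fun j => by rw [hP, hQ]

theorem rotatesDigits_of_outShuffle [NeZero k] (hm : 0 < m) {w : ℕ} (hw : w ≤ k)
    (hP : ∀ i : Fin (m ^ k),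
      (P i : ℕ) = m ^ w * ((i : ℕ) % m ^ (k - w)) + (i : ℕ) / m ^ (k - w)) :
    RotatesDigits (w : ZMod k) P := fun x j => by
  rw [hP]
  exact outShuffle_div_pow_mod hm hw x.isLt j

def window (k w : ℕ) : Set (ZMod k) := {j | j.val < w}

theorem flipsDigits_inShuffle_mul_inv [NeZero k] (hm : 0 < m) {w : ℕ} (hw : w ≤ k)
    (hP : RotatesDigits (w : ZMod k) P)
    (hQ : ∀ i : Fin (m ^ k),
      (Q i : ℕ) = m ^ w * ((i : ℕ) % m ^ (k - w)) + (m ^ w - 1 - (i : ℕ) / m ^ (k - w))) :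
    FlipsDigits (window k w) (Q * P⁻¹) := by
  intro x j
  obtain ⟨z, rfl⟩ := P.surjective x
  obtain ⟨i, rfl⟩ : ∃ i, j = i + w := ⟨j - w, (sub_add_cancel j w).symm⟩
  rw [Perm.mul_apply, Perm.coe_inv, symm_apply_apply, hQ,
    mul_pow_add_pow_sub_one_sub_div_pow_mod hm (div_pow_sub_lt hw z.isLt),
    outShuffle_div_pow_mod hm hw z.isLt, hP]
  congr

end Permutations

section Families

variable {k : ℕ}

structure IsShiftClosed (𝓕 : Set (Set (ZMod k))) : Prop where
  empty_mem : ∅ ∈ 𝓕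
  symmDiff_mem {S T : Set (ZMod k)} : S ∈ 𝓕 → T ∈ 𝓕 → S ∆ T ∈ 𝓕
  preimage_add_mem {S : Set (ZMod k)} (a : ZMod k) : S ∈ 𝓕 → (· + a) ⁻¹' S ∈ 𝓕

theorem window_zero : window k 0 = ∅ := by
  simp [window]

theorem window_succ {w : ℕ} (hw : w < k) : window k (w + 1) = window k w ∆ {(w : ZMod k)} := by
  have : NeZero k := ⟨by omega⟩
  ext j
  have hj : j = (w : ZMod k) ↔ j.val = w := by
    rw [← (ZMod.val_injective k).eq_iff, ZMod.val_natCast_of_lt hw]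
  simp only [window, mem_symmDiff, mem_ofPred_eq, mem_singleton_iff, hj]
  omega

theorem window_two (hk : 2 ≤ k) : window k 2 = {0} ∆ {1} := by
  rw [window_succ (by omega), window_succ (by omega), window_zero]
  simp

theorem window_symmDiff_preimage_add_one {w : ℕ} (hw : w ≤ k) :
    window k w ∆ ((· + 1) ⁻¹' window k w) = {-1} ∆ {(w : ZMod k) - 1} := by
  induction w with
  | zero => simp [window_zero]
  | succ w ih =>
    rw [window_succ (by omega), preimage_symmDiff, preimage_add_right_singleton,
      symmDiff_symmDiff_symmDiff_comm, ih (by omega), ← sub_eq_add_neg,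
      symmDiff_symmDiff_symmDiff_comm, symmDiff_self, symmDiff_bot, Nat.cast_succ,
      add_sub_cancel_right]

variable {𝓕 : Set (Set (ZMod k))}

theorem IsShiftClosed.pair_mem (h : IsShiftClosed 𝓕) {b c : ZMod k} (hbc : {b} ∆ {c} ∈ 𝓕)
    (u : ZMod k) : {u} ∆ {u + (c - b)} ∈ 𝓕 := by
  have := h.preimage_add_mem (b - u) hbc
  rwa [preimage_symmDiff, preimage_add_right_singleton, preimage_add_right_singleton,
    show b + -(b - u) = u by abel, show c + -(b - u) = u + (c - b) by abel] at this

theorem IsShiftClosed.pair_mem_nsmul (h : IsShiftClosed 𝓕) {a : ZMod k}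
    (hpair : ∀ u, {u} ∆ {u + a} ∈ 𝓕) (n : ℕ) (u : ZMod k) : {u} ∆ {u + n • a} ∈ 𝓕 := by
  induction n with
  | zero => simpa using h.empty_mem
  | succ n ih =>
    have := h.symmDiff_mem ih (hpair (u + n • a))
    rwa [symmDiff_assoc, symmDiff_symmDiff_cancel_left, add_assoc, ← succ_nsmul] at this

theorem exists_nsmul_natCast_eq_one {y : ℕ} (hk : 2 ≤ k) (hy : y.Coprime k) :
    ∃ n : ℕ, n • (y : ZMod k) = 1 := by
  obtain ⟨n, -, hn⟩ := Nat.exists_mul_mod_eq_one_of_coprime hy (by omega)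
  refine ⟨n, ?_⟩
  rw [nsmul_eq_mul, mul_comm, ← Nat.cast_mul, ← ZMod.natCast_mod, hn, Nat.cast_one]

theorem IsShiftClosed.window_two_mem (h : IsShiftClosed 𝓕) (hk : 2 ≤ k) {y : ℕ} (hyk : y ≤ k)
    (hy : y.Coprime k) (hW : window k y ∈ 𝓕) : window k 2 ∈ 𝓕 := by
  have hpair : ∀ u, {u} ∆ {u + (y : ZMod k)} ∈ 𝓕 := by
    have := window_symmDiff_preimage_add_one hyk ▸ h.symmDiff_mem hW (h.preimage_add_mem 1 hW)
    simpa using h.pair_mem this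
  obtain ⟨n, hn⟩ := exists_nsmul_natCast_eq_one hk hy
  simpa [window_two hk, hn] using h.pair_mem_nsmul hpair n 0

theorem IsShiftClosed.window_mem_of_even (h : IsShiftClosed 𝓕) (hW : window k 2 ∈ 𝓕) {y : ℕ}
    (hy : Even y) (hyk : y ≤ k) : window k y ∈ 𝓕 := by
  obtain ⟨s, rfl⟩ := hy
  induction s with
  | zero => simpa [window_zero] using h.empty_mem
  | succ s ih =>
    have hpair := h.pair_mem (window_two (k := k) (by omega) ▸ hW) ((s + s : ℕ) : ZMod k)
    rw [show s + 1 + (s + 1) = s + s + 1 + 1 by ring, window_succ (by omega),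
      window_succ (by omega), symmDiff_assoc]
    simpa using h.symmDiff_mem (ih (by omega)) hpair

end Families

section Subgroups

variable {m k : ℕ} {G : Subgroup (Perm (Fin (m ^ k)))}

def flipSets (G : Subgroup (Perm (Fin (m ^ k)))) : Set (Set (ZMod k)) :=
  {S | ∃ P ∈ G, FlipsDigits S P}

theorem isShiftClosed_flipSets [NeZero k] (hm : 0 < m) {R : Perm (Fin (m ^ k))} (hRG : R ∈ G)
    (hR : RotatesDigits 1 R) : IsShiftClosed (flipSets G) where
  empty_mem := ⟨1, G.one_mem, flipsDigits_one⟩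
  symmDiff_mem := fun ⟨P, hPG, hP⟩ ⟨Q, hQG, hQ⟩ => ⟨P * Q, G.mul_mem hPG hQG, hP.mul hm hQ⟩
  preimage_add_mem a := fun ⟨P, hPG, hP⟩ =>
    have hRa : RotatesDigits a (R ^ a.val) := by simpa using hR.pow a.val
    ⟨_, G.mul_mem (G.mul_mem (G.inv_mem (G.pow_mem hRG _)) hPG) (G.pow_mem hRG _), hP.conj hRa⟩

theorem mem_of_flipsDigits {S : Set (ZMod k)} {F : Perm (Fin (m ^ k))} (hS : S ∈ flipSets G)
    (hF : FlipsDigits S F) : F ∈ G := by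
  obtain ⟨P, hPG, hP⟩ := hS
  rwa [hF.eq hP]

end Subgroups

end ShuffleGroup

open ShuffleGroup

theorem shuffle_group_even_reduction_general (m k y : ℕ) (hm : 2 ≤ m) (hk : 2 ≤ k)
    (hyeven : Even y) (hyk : y < k) (hgcd : Nat.gcd y k = 1)
    (O I2 Oy Iy : Equiv.Perm (Fin (m ^ k)))
    (hO : ∀ i : Fin (m ^ k),
      (O i : ℕ) = m * ((i : ℕ) % m ^ (k - 1)) + (i : ℕ) / m ^ (k - 1))
    (hI2 : ∀ i : Fin (m ^ k),
      (I2 i : ℕ) = m ^ 2 * ((i : ℕ) % m ^ (k - 2)) + (m ^ 2 - 1 - (i : ℕ) / m ^ (k - 2)))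
    (hOy : ∀ i : Fin (m ^ k),
      (Oy i : ℕ) = m ^ y * ((i : ℕ) % m ^ (k - y)) + (i : ℕ) / m ^ (k - y))
    (hIy : ∀ i : Fin (m ^ k),
      (Iy i : ℕ) = m ^ y * ((i : ℕ) % m ^ (k - y)) + (m ^ y - 1 - (i : ℕ) / m ^ (k - y))) :
    Subgroup.closure {Iy, Oy} = Subgroup.closure {I2, O} := by
  have : NeZero k := ⟨by omega⟩
  have hm₀ : 0 < m := by omega
  have hOrot : RotatesDigits 1 O := by
    simpa using rotatesDigits_of_outShuffle hm₀ (w := 1) (by omega) (by simpa using hO)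
  have hOyrot : RotatesDigits y Oy := rotatesDigits_of_outShuffle hm₀ hyk.le hOy
  have hOyO : Oy = O ^ y := hOyrot.eq (by simpa using hOrot.pow y)
  obtain ⟨n, hn⟩ := exists_nsmul_natCast_eq_one hk hgcd
  have hOOy : O = Oy ^ n := hOrot.eq (hn ▸ hOyrot.pow n)
  have hF2 := flipsDigits_inShuffle_mul_inv hm₀ hk (by simpa using hOrot.pow 2) hI2
  have hFy := flipsDigits_inShuffle_mul_inv hm₀ hyk.le hOyrot hIy
  set H := Subgroup.closure {Iy, Oy}
  set K := Subgroup.closure {I2, O}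
  have hIyH : Iy ∈ H := Subgroup.subset_closure (by simp)
  have hOyH : Oy ∈ H := Subgroup.subset_closure (by simp)
  have hI2K : I2 ∈ K := Subgroup.subset_closure (by simp)
  have hOK : O ∈ K := Subgroup.subset_closure (by simp)
  have hOH : O ∈ H := hOOy ▸ pow_mem hOyH n
  have hOyK : Oy ∈ K := hOyO ▸ pow_mem hOK y
  have h2H : window k 2 ∈ flipSets H :=
    (isShiftClosed_flipSets hm₀ hOH hOrot).window_two_mem hk hyk.le hgcd
      ⟨_, mul_mem hIyH (inv_mem hOyH), hFy⟩
  have hyK : window k y ∈ flipSets K :=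
    (isShiftClosed_flipSets hm₀ hOK hOrot).window_mem_of_even
      ⟨_, mul_mem hI2K (inv_mem (pow_mem hOK 2)), hF2⟩ hyeven hyk.le
  have hI2H : I2 ∈ H := by simpa using mul_mem (mem_of_flipsDigits h2H hF2) (pow_mem hOH 2)
  have hIyK : Iy ∈ K := by simpa using mul_mem (mem_of_flipsDigits hyK hFy) hOyK
  apply le_antisymm <;> rw [Subgroup.closure_le, insert_subset_iff, singleton_subset_iff]
  exacts [⟨hIyK, hOyK⟩, ⟨hI2H, hOH⟩]

/-- For `m ≥ 2`, `k ≥ 2` and `y` a positive even integer with `y < k` and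
`gcd(y, k) = 1`, on a deck of `m^k` cards the subgroup generated by the in and out
`m^y`-shuffles (cut into `m^y` stacks of `m^(k−y)` cards) equals the subgroup generated by
the in `m^2`-shuffle and the out `m`-shuffle. -/
theorem shuffle_group_even_reduction (m k y : ℕ) (hm : 2 ≤ m) (hk : 2 ≤ k)
    (hy0 : 0 < y) (hyeven : Even y) (hyk : y < k) (hgcd : Nat.gcd y k = 1)
    (O I2 Oy Iy : Equiv.Perm (Fin (m ^ k)))
    (hO : ∀ i : Fin (m ^ k),
      (O i : ℕ) = m * ((i : ℕ) % m ^ (k - 1)) + (i : ℕ) / m ^ (k - 1))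
    (hI2 : ∀ i : Fin (m ^ k),
      (I2 i : ℕ) = m ^ 2 * ((i : ℕ) % m ^ (k - 2)) + (m ^ 2 - 1 - (i : ℕ) / m ^ (k - 2)))
    (hOy : ∀ i : Fin (m ^ k),
      (Oy i : ℕ) = m ^ y * ((i : ℕ) % m ^ (k - y)) + (i : ℕ) / m ^ (k - y))
    (hIy : ∀ i : Fin (m ^ k),
      (Iy i : ℕ) = m ^ y * ((i : ℕ) % m ^ (k - y)) + (m ^ y - 1 - (i : ℕ) / m ^ (k - y))) :
    Subgroup.closure {Iy, Oy} = Subgroup.closure {I2, O} :=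
  shuffle_group_even_reduction_general m k y hm hk hyeven hyk hgcd O I2 Oy Iy hO hI2 hOy hIy
end
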